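/- arXiv:2410.00415 — 9 statements merged into one kernel-verified Lean document; each statement's English description precedes it below -/
import Mathlib

section
/- Let p₁ = (p₁₁, p₁₂) and p₂ = (p₂₁, p₂₂) be points of ℝ² with p₁ ≠ p₂, and let A be a 2×2 real matrix of rank 2 all of whose entries are nonzero. Then there exist real numbers q, r, a, b with (q, r) ≠ (0, 0) and a > 0, b > 0 such that G(p₁, p₂, A) is A-equivalent to the map (x, y) ↦ ((x − q)² + (y − r)², a x² + b y²). -/
open Matrix

noncomputable section

/-- A diffeomorphism of the plane: a smooth bijection with smooth inverse. -/
def IsDiffeo (Φ : ℝ × ℝ → ℝ × ℝ) : Prop :=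
  ∃ e : (ℝ × ℝ) ≃ (ℝ × ℝ), ⇑e = Φ ∧ ContDiff ℝ (⊤ : ℕ∞) ⇑e ∧ ContDiff ℝ (⊤ : ℕ∞) ⇑e.symm

/-- `F` and `G` are A-equivalent: `Ψ ∘ F ∘ Φ = G` for diffeomorphisms `Φ, Ψ` of the plane. -/
def AEquiv (F G : ℝ × ℝ → ℝ × ℝ) : Prop :=
  ∃ Φ Ψ : ℝ × ℝ → ℝ × ℝ, IsDiffeo Φ ∧ IsDiffeo Ψ ∧ Ψ ∘ F ∘ Φ = G

/-- Generalized distance-squared mapping `G(p₁, p₂, A)`. -/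
def Gmap (p₁ p₂ : ℝ × ℝ) (A : Matrix (Fin 2) (Fin 2) ℝ) : ℝ × ℝ → ℝ × ℝ :=
  fun z => (A 0 0 * (z.1 - p₁.1) ^ 2 + A 0 1 * (z.2 - p₁.2) ^ 2,
            A 1 0 * (z.1 - p₂.1) ^ 2 + A 1 1 * (z.2 - p₂.2) ^ 2)

/-- Singular set `S(F)`: points where the Jacobian determinant of `F` vanishes. -/
def singularSet (F : ℝ × ℝ → ℝ × ℝ) : Set (ℝ × ℝ) :=
  {z | LinearMap.det (fderiv ℝ F z).toLinearMap = 0}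

/-- Bivariate normal density `φ(·; μ, S)` on the plane. -/
def gauss (μ : Fin 2 → ℝ) (S : Matrix (Fin 2) (Fin 2) ℝ) (z : ℝ × ℝ) : ℝ :=
  (2 * Real.pi * Real.sqrt S.det)⁻¹ *
    Real.exp (-(1 / 2) * dotProduct ![z.1 - μ 0, z.2 - μ 1] (S⁻¹ *ᵥ ![z.1 - μ 0, z.2 - μ 1]))

/-- Mixture density `M_c = c f₁ + (1 - c) f₂`. -/
def mix (f₁ f₂ : ℝ × ℝ → ℝ) (c : ℝ) : ℝ × ℝ → ℝ :=
  fun z => c * f₁ z + (1 - c) * f₂ z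

/-- `f₁ = φ(·; μ₁, V₁)` and `f₂ = φ(·; μ₂, V₂)` are codirectional:
`μ₁ - μ₂` is an eigenvector of both `V₁` and `V₂`. -/
def Codirectional (μ₁ μ₂ : Fin 2 → ℝ) (V₁ V₂ : Matrix (Fin 2) (Fin 2) ℝ) : Prop :=
  ∃ a b : ℝ, V₁ *ᵥ (μ₁ - μ₂) = a • (μ₁ - μ₂) ∧ V₂ *ᵥ (μ₁ - μ₂) = b • (μ₁ - μ₂)

/-- The covariance matrices `V₁` and `V₂` are proportional. -/
def Proportional (V₁ V₂ : Matrix (Fin 2) (Fin 2) ℝ) : Prop :=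
  ∃ c : ℝ, 0 < c ∧ V₁ = c • V₂

/-- An affine line in the plane. -/
def IsAffineLine (ℓ : Set (ℝ × ℝ)) : Prop :=
  ∃ p v : ℝ × ℝ, v ≠ 0 ∧ ℓ = {q | ∃ t : ℝ, q = p + t • v}

end

lemma affineDiffeo (m11 m12 m21 m22 c1 c2 : ℝ) (h : m11*m22 - m12*m21 ≠ 0) :
    IsDiffeo (fun z : ℝ × ℝ => (m11*z.1 + m12*z.2 + c1, m21*z.1 + m22*z.2 + c2)) := by
  refine ⟨⟨fun z => (m11*z.1 + m12*z.2 + c1, m21*z.1 + m22*z.2 + c2),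
    fun w => ((m22*(w.1 - c1) - m12*(w.2 - c2))/(m11*m22 - m12*m21),
              (m11*(w.2 - c2) - m21*(w.1 - c1))/(m11*m22 - m12*m21)), ?_, ?_⟩, rfl, ?_, ?_⟩
  · intro z
    have := h
    ext
    · simp only [div_eq_mul_inv]; linear_combination z.1 * mul_inv_cancel₀ h
    · simp only [div_eq_mul_inv]; linear_combination z.2 * mul_inv_cancel₀ h
  · intro w
    ext
    · simp only [div_eq_mul_inv]; linear_combination (w.1 - c1) * mul_inv_cancel₀ h
    · simp only [div_eq_mul_inv]; linear_combination (w.2 - c2) * mul_inv_cancel₀ h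
  · exact (((contDiff_const.mul contDiff_fst).add (contDiff_const.mul contDiff_snd)).add
      contDiff_const).prodMk (((contDiff_const.mul contDiff_fst).add
      (contDiff_const.mul contDiff_snd)).add contDiff_const)
  · exact (((contDiff_const.mul (contDiff_fst.sub contDiff_const)).sub
        (contDiff_const.mul (contDiff_snd.sub contDiff_const))).div_const _).prodMk
      (((contDiff_const.mul (contDiff_snd.sub contDiff_const)).sub
        (contDiff_const.mul (contDiff_fst.sub contDiff_const))).div_const _)


lemma detne (A : Matrix (Fin 2) (Fin 2) ℝ) (hrank : A.rank = 2) : A.det ≠ 0 := by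
  intro h
  obtain ⟨v, hv, hAv⟩ := (Matrix.exists_mulVec_eq_zero_iff).2 h
  have hker : v ∈ LinearMap.ker A.mulVecLin := by
    simpa [Matrix.mulVecLin_apply] using hAv
  have hrn := LinearMap.finrank_range_add_finrank_ker A.mulVecLin
  rw [show Module.finrank ℝ (Fin 2 → ℝ) = 2 by simp] at hrn
  have h0 : Module.finrank ℝ (LinearMap.ker A.mulVecLin) = 0 := by
    have : A.rank = Module.finrank ℝ (LinearMap.range A.mulVecLin) := rfl
    omega
  rw [Submodule.finrank_eq_zero] at h0
  rw [h0] at hker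
  exact hv (by simpa using hker)

set_option maxHeartbeats 2000000 in
theorem stmt_1 (p₁ p₂ : ℝ × ℝ) (hp : p₁ ≠ p₂)
    (A : Matrix (Fin 2) (Fin 2) ℝ) (hA : ∀ i j, A i j ≠ 0) (hrank : A.rank = 2) :
    ∃ q r a b : ℝ, (q, r) ≠ ((0 : ℝ), (0 : ℝ)) ∧ 0 < a ∧ 0 < b ∧
      AEquiv (Gmap p₁ p₂ A)
        (fun z => ((z.1 - q) ^ 2 + (z.2 - r) ^ 2, a * z.1 ^ 2 + b * z.2 ^ 2)) := by
  have ha := hA 0 0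
  have hb := hA 0 1
  have hc := hA 1 0
  have he := hA 1 1
  have hd : A 0 0 * A 1 1 - A 0 1 * A 1 0 ≠ 0 := by
    have := detne A hrank
    rwa [Matrix.det_fin_two] at this
  set a := A 0 0 with hA00
  set b := A 0 1 with hA01
  set c := A 1 0 with hA10
  set e := A 1 1 with hA11
  set d := a * e - b * c with hdd
  set m21 := (e - c)/d with hm21
  set m22 := (a - b)/d with hm22
  set m11 := (e - c/4)/d with hm11
  set m12 := (a/4 - b)/d with hm12
  set β := m21*a*p₁.1 + m22*c*p₂.1 with hβ
  set δ := m21*b*p₁.2 + m22*e*p₂.2 with hδ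
  set q := -(m11*a*(β - p₁.1) + m12*c*(β - p₂.1)) with hq
  set r := -(2*(m11*b*(δ - p₁.2) + m12*e*(δ - p₂.2))) with hr
  set F1c := a*(β - p₁.1)^2 + b*(δ - p₁.2)^2 with hF1
  set F2c := c*(β - p₂.1)^2 + e*(δ - p₂.2)^2 with hF2
  set c1 := q^2 + r^2 - (m11*F1c + m12*F2c) with hc1
  set c2 := -(m21*F1c + m22*F2c) with hc2
  have hdetM : m11*m22 - m12*m21 ≠ 0 := by
    rw [hm11, hm12, hm21, hm22]
    field_simp
    intro h
    rw [div_eq_zero_iff] at h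
    rcases h with h | h
    · exact hd (by rw [hdd]; linarith)
    · exact hd (by simpa using h)
  refine ⟨q, r, 1, 4, ?_, one_pos, by norm_num, ?_⟩
  · -- (q, r) ≠ (0, 0)
    intro hqr
    rw [Prod.mk.injEq] at hqr
    obtain ⟨hq0, hr0⟩ := hqr
    have hq2 : m21*a*(β - p₁.1) + m22*c*(β - p₂.1) = 0 := by
      rw [hβ, hm21, hm22]; field_simp; ring
    have hr2 : m21*b*(δ - p₁.2) + m22*e*(δ - p₂.2) = 0 := by
      rw [hδ, hm21, hm22]; field_simp; ring
    have hq1 : m11*(a*(β - p₁.1)) + m12*(c*(β - p₂.1)) = 0 := by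
      rw [hq] at hq0; linarith [hq0]
    have hr1 : m11*(b*(δ - p₁.2)) + m12*(e*(δ - p₂.2)) = 0 := by
      rw [hr] at hr0; linarith [hr0]
    have hu1 : a*(β - p₁.1) = 0 := by
      have h1 : (m11*m22 - m12*m21) * (a*(β - p₁.1)) = 0 := by
        linear_combination m22 * hq1 - m12 * hq2
      exact (mul_eq_zero.1 h1).resolve_left hdetM
    have hu2 : c*(β - p₂.1) = 0 := by
      have h1 : (m11*m22 - m12*m21) * (c*(β - p₂.1)) = 0 := by
        linear_combination m11 * hq2 - m21 * hq1
      exact (mul_eq_zero.1 h1).resolve_left hdetM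
    have hv1 : b*(δ - p₁.2) = 0 := by
      have h1 : (m11*m22 - m12*m21) * (b*(δ - p₁.2)) = 0 := by
        linear_combination m22 * hr1 - m12 * hr2
      exact (mul_eq_zero.1 h1).resolve_left hdetM
    have hv2 : e*(δ - p₂.2) = 0 := by
      have h1 : (m11*m22 - m12*m21) * (e*(δ - p₂.2)) = 0 := by
        linear_combination m11 * hr2 - m21 * hr1
      exact (mul_eq_zero.1 h1).resolve_left hdetM
    have e1 : p₁.1 = β := by have := (mul_eq_zero.1 hu1).resolve_left ha; linarith
    have e2 : p₂.1 = β := by have := (mul_eq_zero.1 hu2).resolve_left hc; linarith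
    have e3 : p₁.2 = δ := by have := (mul_eq_zero.1 hv1).resolve_left hb; linarith
    have e4 : p₂.2 = δ := by have := (mul_eq_zero.1 hv2).resolve_left he; linarith
    exact hp (Prod.ext (by rw [e1, e2]) (by rw [e3, e4]))
  · refine ⟨fun z => (1*z.1 + 0*z.2 + β, 0*z.1 + 2*z.2 + δ),
      fun w => (m11*w.1 + m12*w.2 + c1, m21*w.1 + m22*w.2 + c2),
      affineDiffeo 1 0 0 2 β δ (by norm_num), affineDiffeo m11 m12 m21 m22 c1 c2 hdetM, ?_⟩
    have ht1 : m11*a + m12*c = 1 := by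
      rw [hm11, hm12]; field_simp; linear_combination hdd
    have ht2 : m11*b + m12*e = 1/4 := by
      rw [hm11, hm12]; field_simp; linear_combination hdd
    have hs1 : m21*a + m22*c = 1 := by
      rw [hm21, hm22]; field_simp; linear_combination hdd
    have hs2 : m21*b + m22*e = 1 := by
      rw [hm21, hm22]; field_simp; linear_combination hdd
    have hq2 : m21*a*(β - p₁.1) + m22*c*(β - p₂.1) = 0 := by
      rw [hβ, hm21, hm22]; field_simp; ring
    have hr2 : m21*b*(δ - p₁.2) + m22*e*(δ - p₂.2) = 0 := by
      rw [hδ, hm21, hm22]; field_simp; ring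
    funext z
    simp only [Function.comp_apply, Gmap, Prod.mk.injEq]
    constructor
    · rw [hc1, hq, hr, hF1, hF2]
      linear_combination z.1^2 * ht1 + 4*z.2^2 * ht2
    · rw [hc2, hF1, hF2]
      linear_combination z.1^2 * hs1 + 4*z.2^2 * hs2 + 2*z.1 * hq2 + 4*z.2 * hr2
end

section
/- Let p₁ = (p₁₁, p₁₂) and p₂ = (p₂₁, p₂₂) be points of ℝ² with p₁₁ ≠ p₂₁ and p₁₂ ≠ p₂₂, and let A and Ã both be 2×2 real matrices of rank 2 all of whose entries are nonzero. Then G(p₁, p₂, A) is A-equivalent to G(p₁, p₂, Ã). -/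
open Matrix

noncomputable section Aux

/-- affine map of the plane -/
def aff2 (a b c d e f : ℝ) : ℝ × ℝ → ℝ × ℝ :=
  fun z => (a * z.1 + b * z.2 + e, c * z.1 + d * z.2 + f)

lemma contDiff_aff2 (a b c d e f : ℝ) : ContDiff ℝ (⊤ : ℕ∞) (aff2 a b c d e f) := by
  unfold aff2; fun_prop

/-- invertible affine map as an equiv -/
def affEquiv (a b c d e f : ℝ) (h : a * d - b * c ≠ 0) : (ℝ × ℝ) ≃ (ℝ × ℝ) where
  toFun := aff2 a b c d e f
  invFun := aff2 (d / (a * d - b * c)) (-b / (a * d - b * c)) (-c / (a * d - b * c))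
    (a / (a * d - b * c)) ((b * f - d * e) / (a * d - b * c))
    ((c * e - a * f) / (a * d - b * c))
  left_inv := by
    rintro ⟨x, y⟩
    simp only [aff2, Prod.mk.injEq]
    constructor <;> (field_simp [show d * a - b * c ≠ 0 by intro h'; apply h; linarith, show a * d - c * b ≠ 0 by intro h'; apply h; linarith, show d * a - c * b ≠ 0 by intro h'; apply h; linarith]; ring)
  right_inv := by
    rintro ⟨x, y⟩
    simp only [aff2, Prod.mk.injEq]
    constructor <;> (field_simp [show d * a - b * c ≠ 0 by intro h'; apply h; linarith, show a * d - c * b ≠ 0 by intro h'; apply h; linarith, show d * a - c * b ≠ 0 by intro h'; apply h; linarith]; ring)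

lemma affEquiv_apply (a b c d e f : ℝ) (h : a * d - b * c ≠ 0) (z : ℝ × ℝ) :
    affEquiv a b c d e f h z = (a * z.1 + b * z.2 + e, c * z.1 + d * z.2 + f) := rfl

lemma contDiff_affEquiv (a b c d e f : ℝ) (h : a * d - b * c ≠ 0) :
    ContDiff ℝ (⊤ : ℕ∞) ⇑(affEquiv a b c d e f h) := contDiff_aff2 a b c d e f

lemma contDiff_affEquiv_symm (a b c d e f : ℝ) (h : a * d - b * c ≠ 0) :
    ContDiff ℝ (⊤ : ℕ∞) ⇑(affEquiv a b c d e f h).symm := contDiff_aff2 _ _ _ _ _ _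

/-- conjugation relation producing A-equivalence -/
def Conj (F G : ℝ × ℝ → ℝ × ℝ) : Prop :=
  ∃ Θ Φ : (ℝ × ℝ) ≃ (ℝ × ℝ), ContDiff ℝ (⊤ : ℕ∞) ⇑Θ ∧ ContDiff ℝ (⊤ : ℕ∞) ⇑Θ.symm ∧
    ContDiff ℝ (⊤ : ℕ∞) ⇑Φ ∧ ContDiff ℝ (⊤ : ℕ∞) ⇑Φ.symm ∧ ∀ z, Θ (F z) = G (Φ z)

lemma Conj.symm {F G : ℝ × ℝ → ℝ × ℝ} (h : Conj F G) : Conj G F := by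
  obtain ⟨Θ, Φ, h1, h2, h3, h4, h5⟩ := h
  refine ⟨Θ.symm, Φ.symm, h2, by simpa using h1, h4, by simpa using h3, fun z => ?_⟩
  have := h5 (Φ.symm z)
  rw [Equiv.apply_symm_apply] at this
  rw [← this, Equiv.symm_apply_apply]

lemma Conj.trans {F G H : ℝ × ℝ → ℝ × ℝ} (h : Conj F G) (h' : Conj G H) : Conj F H := by
  obtain ⟨Θ, Φ, h1, h2, h3, h4, h5⟩ := h
  obtain ⟨Θ', Φ', h1', h2', h3', h4', h5'⟩ := h'
  refine ⟨Θ.trans Θ', Φ.trans Φ', ?_, ?_, ?_, ?_, fun z => ?_⟩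
  · exact h1'.comp h1
  · exact h2.comp h2'
  · exact h3'.comp h3
  · exact h4.comp h4'
  · show Θ' (Θ (F z)) = H (Φ' (Φ z))
    rw [h5, h5']

lemma Conj.aequiv {F G : ℝ × ℝ → ℝ × ℝ} (h : Conj F G) : AEquiv F G := by
  obtain ⟨Θ, Φ, h1, h2, h3, h4, h5⟩ := h
  refine ⟨⇑Φ.symm, ⇑Θ, ⟨Φ.symm, rfl, h4, by simpa using h3⟩, ⟨Θ, rfl, h1, h2⟩, funext fun z => ?_⟩
  show Θ (F (Φ.symm z)) = G z
  rw [h5, Equiv.apply_symm_apply]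

/-- normal form family -/
def Nmap (lam kap : ℝ) : ℝ × ℝ → ℝ × ℝ :=
  fun z => (z.1 ^ 2 + lam * z.2, z.2 ^ 2 + kap * z.1)

lemma cube_root (t : ℝ) : ∃ p : ℝ, p ^ 3 = t := by
  rcases le_total 0 t with h | h
  · refine ⟨t ^ ((1 : ℝ) / 3), ?_⟩
    rw [← Real.rpow_natCast (t ^ ((1 : ℝ) / 3)) 3, ← Real.rpow_mul h]
    norm_num
  · refine ⟨-((-t) ^ ((1 : ℝ) / 3)), ?_⟩
    rw [Odd.neg_pow ⟨1, by norm_num⟩, ← Real.rpow_natCast ((-t) ^ ((1 : ℝ) / 3)) 3,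
      ← Real.rpow_mul (by linarith)]
    norm_num

lemma step2 (lam kap : ℝ) (hl : lam ≠ 0) (hk : kap ≠ 0) :
    Conj (Nmap lam kap) (Nmap 1 1) := by
  obtain ⟨p, hp3⟩ := cube_root (lam ^ 2 * kap)
  have hp : p ≠ 0 := by
    intro h; rw [h] at hp3
    exact (mul_ne_zero (pow_ne_zero 2 hl) hk) (by linarith [hp3])
  obtain ⟨q, hqdef⟩ : ∃ q : ℝ, q = p ^ 2 / lam := ⟨_, rfl⟩
  have hq : q ≠ 0 := by rw [hqdef]; exact div_ne_zero (pow_ne_zero 2 hp) hl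
  have hql : lam * q = p ^ 2 := by rw [hqdef]; field_simp
  have hkp : kap * p = q ^ 2 := by
    rw [hqdef, div_pow, eq_div_iff (pow_ne_zero 2 hl)]; linear_combination -p * hp3
  have hdet1 : (1 / p ^ 2) * (1 / q ^ 2) - 0 * 0 ≠ 0 := by
    have h' : (1 / p ^ 2) * (1 / q ^ 2) - 0 * 0 = 1 / (p ^ 2 * q ^ 2) := by ring
    rw [h']
    exact one_div_ne_zero (mul_ne_zero (pow_ne_zero 2 hp) (pow_ne_zero 2 hq))
  have hdet2 : (1 / p) * (1 / q) - 0 * 0 ≠ 0 := by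
    have h' : (1 / p) * (1 / q) - 0 * 0 = 1 / (p * q) := by ring
    rw [h']
    exact one_div_ne_zero (mul_ne_zero hp hq)
  refine ⟨affEquiv (1 / p ^ 2) 0 0 (1 / q ^ 2) 0 0 hdet1,
    affEquiv (1 / p) 0 0 (1 / q) 0 0 hdet2,
    contDiff_affEquiv _ _ _ _ _ _ _, contDiff_affEquiv_symm _ _ _ _ _ _ _,
    contDiff_affEquiv _ _ _ _ _ _ _, contDiff_affEquiv_symm _ _ _ _ _ _ _, fun z => ?_⟩
  obtain ⟨x, y⟩ := z
  simp only [affEquiv_apply, Nmap, Prod.mk.injEq]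
  constructor
  · field_simp; linear_combination y * hql
  · field_simp; linear_combination x * hkp

lemma step1 (p₁ p₂ : ℝ × ℝ) (A : Matrix (Fin 2) (Fin 2) ℝ)
    (hA : ∀ i j, A i j ≠ 0) (hD : A 0 0 * A 1 1 - A 0 1 * A 1 0 ≠ 0)
    (h1 : p₁.1 ≠ p₂.1) (h2 : p₁.2 ≠ p₂.2) :
    ∃ lam kap : ℝ, lam ≠ 0 ∧ kap ≠ 0 ∧ Conj (Gmap p₁ p₂ A) (Nmap lam kap) := by
  set a := A 0 0 with ha
  set b := A 0 1 with hb
  set c := A 1 0 with hc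
  set d := A 1 1 with hd
  set D := a * d - b * c with hDdef
  set α := p₁.1 - p₂.1 with hα
  set β := p₁.2 - p₂.2 with hβ
  have hαne : α ≠ 0 := sub_ne_zero.mpr h1
  have hβne : β ≠ 0 := sub_ne_zero.mpr h2
  have hane : a ≠ 0 := hA 0 0
  have hbne : b ≠ 0 := hA 0 1
  have hcne : c ≠ 0 := hA 1 0
  have hdne : d ≠ 0 := hA 1 1
  set e := -b * c * α / D with he
  set f := a * d * β / D with hf
  set lam := -2 * b * d * β / D with hlam
  set kap := 2 * a * c * α / D with hkap
  set C₁ := (-b * c * α ^ 2 - b * d * β ^ 2) / D - e ^ 2 - lam * f with hC₁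
  set C₂ := (a * c * α ^ 2 + a * d * β ^ 2) / D - f ^ 2 - kap * e with hC₂
  have hlne : lam ≠ 0 := by
    rw [hlam]; exact div_ne_zero (by simp [hbne, hdne, hβne]) hD
  have hkne : kap ≠ 0 := by
    rw [hkap]; exact div_ne_zero (by simp [hane, hcne, hαne]) hD
  have hdet1 : (d / D) * (a / D) - (-b / D) * (-c / D) ≠ 0 := by
    have h' : (d / D) * (a / D) - (-b / D) * (-c / D) = (d * a - b * c) / (D * D) := by
      rw [div_mul_div_comm, div_mul_div_comm, neg_mul_neg, div_sub_div_same]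
    rw [h']
    refine div_ne_zero ?_ (mul_ne_zero hD hD)
    intro hcon; apply hD; linarith
  have hdet2 : (1 : ℝ) * 1 - 0 * 0 ≠ 0 := by norm_num
  refine ⟨lam, kap, hlne, hkne,
    affEquiv (d / D) (-b / D) (-c / D) (a / D) (-C₁) (-C₂) hdet1,
    affEquiv 1 0 0 1 (e - p₁.1) (f - p₁.2) hdet2,
    contDiff_affEquiv _ _ _ _ _ _ _, contDiff_affEquiv_symm _ _ _ _ _ _ _,
    contDiff_affEquiv _ _ _ _ _ _ _, contDiff_affEquiv_symm _ _ _ _ _ _ _, fun z => ?_⟩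
  obtain ⟨x, y⟩ := z
  simp only [affEquiv_apply, Gmap, Nmap, Prod.mk.injEq, ← ha, ← hb, ← hc, ← hd]
  have hx2 : x - p₂.1 = (x - p₁.1) + α := by rw [hα]; ring
  have hy2 : y - p₂.2 = (y - p₁.2) + β := by rw [hβ]; ring
  have hD2 : a * d - b * c ≠ 0 := by rw [← hDdef]; exact hD
  rw [hx2, hy2, hC₁, hC₂, he, hf, hlam, hkap, hDdef]
  constructor
  · field_simp [show d * a - b * c ≠ 0 by intro h'; apply hD2; linarith, show a * d - c * b ≠ 0 by intro h'; apply hD2; linarith]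
    ring
  · field_simp [show d * a - b * c ≠ 0 by intro h'; apply hD2; linarith, show a * d - c * b ≠ 0 by intro h'; apply hD2; linarith]
    ring

lemma det_ne_zero_of_rank_two (A : Matrix (Fin 2) (Fin 2) ℝ) (h : A.rank = 2) :
    A.det ≠ 0 := by
  intro hdet
  obtain ⟨v, hv, hAv⟩ := Matrix.exists_mulVec_eq_zero_iff.mpr hdet
  have hker : v ∈ LinearMap.ker A.mulVecLin := by
    simpa [Matrix.mulVecLin_apply] using hAv
  have hpos : 0 < Module.finrank ℝ (LinearMap.ker A.mulVecLin) := by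
    rw [Module.finrank_pos_iff]
    exact nontrivial_of_ne ⟨v, hker⟩ 0 (by simpa using hv)
  have hrn := LinearMap.finrank_range_add_finrank_ker A.mulVecLin
  rw [Module.finrank_fintype_fun_eq_card] at hrn
  rw [Matrix.rank] at h
  simp [Fintype.card_fin] at hrn
  omega

lemma det_expand (A : Matrix (Fin 2) (Fin 2) ℝ) :
    A.det = A 0 0 * A 1 1 - A 0 1 * A 1 0 := by
  rw [Matrix.det_fin_two]

end Aux

theorem stmt_3 (p₁ p₂ : ℝ × ℝ) (h1 : p₁.1 ≠ p₂.1) (h2 : p₁.2 ≠ p₂.2)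
    (A B : Matrix (Fin 2) (Fin 2) ℝ)
    (hA : ∀ i j, A i j ≠ 0) (hArank : A.rank = 2)
    (hB : ∀ i j, B i j ≠ 0) (hBrank : B.rank = 2) :
    AEquiv (Gmap p₁ p₂ A) (Gmap p₁ p₂ B) := by
  have hDA : A 0 0 * A 1 1 - A 0 1 * A 1 0 ≠ 0 := by
    rw [← det_expand]; exact det_ne_zero_of_rank_two A hArank
  have hDB : B 0 0 * B 1 1 - B 0 1 * B 1 0 ≠ 0 := by
    rw [← det_expand]; exact det_ne_zero_of_rank_two B hBrank
  obtain ⟨lamA, kapA, hlA, hkA, hcA⟩ := step1 p₁ p₂ A hA hDA h1 h2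
  obtain ⟨lamB, kapB, hlB, hkB, hcB⟩ := step1 p₁ p₂ B hB hDB h1 h2
  exact ((hcA.trans (step2 _ _ hlA hkA)).trans
    ((hcB.trans (step2 _ _ hlB hkB)).symm)).aequiv
end

section
/- Let p₁ = (p₁₁, p₁₂) and p₂ = (p₂₁, p₂₂) be points of ℝ² such that exactly one of the equalities p₁₁ = p₂₁ and p₁₂ = p₂₂ holds (so p₁ ≠ p₂), and let A be a 2×2 real matrix of rank 2 all of whose entries are nonzero. Then the generalized distance-squared mapping G(p₁, p₂, A) is A-equivalent to the map U(x, y) = (x, x y² + y⁴). -/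
open Matrix

set_option maxHeartbeats 2000000

lemma isDiffeo_mk (Φ Φ' : ℝ × ℝ → ℝ × ℝ) (h1 : ∀ z, Φ' (Φ z) = z)
    (h2 : ∀ z, Φ (Φ' z) = z) (hc : ContDiff ℝ (⊤ : ℕ∞) Φ) (hc' : ContDiff ℝ (⊤ : ℕ∞) Φ') :
    IsDiffeo Φ :=
  ⟨⟨Φ, Φ', h1, h2⟩, rfl, hc, hc'⟩

lemma isDiffeo_comp {Φ₀ Φ : ℝ × ℝ → ℝ × ℝ} (h0 : IsDiffeo Φ₀) (h : IsDiffeo Φ) :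
    IsDiffeo (Φ₀ ∘ Φ) := by
  obtain ⟨e0, he0, hc0, hc0'⟩ := h0
  obtain ⟨e, he, hc, hc'⟩ := h
  refine ⟨e.trans e0, ?_, ?_, ?_⟩
  · rw [Equiv.coe_trans, he0, he]
  · rw [Equiv.coe_trans]; exact hc0.comp hc
  · have : ⇑(e.trans e0).symm = ⇑e.symm ∘ ⇑e0.symm := rfl
    rw [this]; exact hc'.comp hc0'

lemma aequiv_precomp {F U Φ₀ : ℝ × ℝ → ℝ × ℝ} (h0 : IsDiffeo Φ₀)
    (h : AEquiv (F ∘ Φ₀) U) : AEquiv F U := by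
  obtain ⟨Φ, Ψ, hΦ, hΨ, heq⟩ := h
  exact ⟨Φ₀ ∘ Φ, Ψ, isDiffeo_comp h0 hΦ, hΨ, heq⟩

lemma key (a b c d e f : ℝ) (ha : a ≠ 0) (hb : b ≠ 0) (he : e ≠ 0)
    (hD : a * d - b * c ≠ 0) :
    AEquiv (fun z : ℝ × ℝ => (a * z.1 ^ 2 + b * z.2 ^ 2,
      c * z.1 ^ 2 + d * z.2 ^ 2 + e * z.2 + f))
      (fun z => (z.1, z.1 * z.2 ^ 2 + z.2 ^ 4)) := by
  have hbe : b * e ≠ 0 := mul_ne_zero hb he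
  have hD2 : (a * d - b * c) ^ 2 ≠ 0 := pow_ne_zero _ hD
  have hD' : d * a - b * c ≠ 0 := by rw [mul_comm d a]; exact hD
  have hD'' : d * a - c * b ≠ 0 := by rw [mul_comm d a, mul_comm c b]; exact hD
  have hbe2 : b ^ 2 * e ^ 2 ≠ 0 := mul_ne_zero (pow_ne_zero _ hb) (pow_ne_zero _ he)
  have h2D : 2 * (a * d - b * c) ≠ 0 := mul_ne_zero two_ne_zero hD
  have h2D2 : 2 * (a * d - b * c) ^ 2 ≠ 0 := mul_ne_zero two_ne_zero hD2
  have h4D2 : 4 * (a * d - b * c) ^ 2 ≠ 0 := mul_ne_zero four_ne_zero hD2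
  refine ⟨fun z : ℝ × ℝ =>
      (z.2, (z.1 / 2 + z.2 ^ 2) * ((a * d - b * c) / (b * e)) - a * e / (2 * (a * d - b * c))),
    fun z : ℝ × ℝ =>
      (-2 * ((d * z.1 - b * (z.2 - f)) / (a * d - b * c) - a * b * e ^ 2 / (2 * (a * d - b * c) ^ 2)),
        b ^ 2 * e ^ 2 / (a * d - b * c) ^ 2 *
            ((-(c * z.1) + a * (z.2 - f)) / (a * d - b * c) + a ^ 2 * e ^ 2 / (4 * (a * d - b * c) ^ 2)) -
          ((d * z.1 - b * (z.2 - f)) / (a * d - b * c) - a * b * e ^ 2 / (2 * (a * d - b * c) ^ 2)) ^ 2),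
    ?_, ?_, ?_⟩
  · refine isDiffeo_mk _
      (fun z : ℝ × ℝ =>
        (-2 * z.1 ^ 2 + 2 * b * e * z.2 / (a * d - b * c) + a * b * e ^ 2 / (a * d - b * c) ^ 2, z.1))
      ?_ ?_ ?_ ?_
    · intro z; rw [Prod.ext_iff]; constructor <;> simp only <;> first | rfl | (field_simp; ring) | field_simp
    · intro z; rw [Prod.ext_iff]; constructor <;> simp only <;> first | rfl | (field_simp; ring) | field_simp
    · fun_prop (disch := (intros; first | assumption | norm_num))
    · fun_prop (disch := (intros; first | assumption | norm_num))
  · refine isDiffeo_mk _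
      (fun z : ℝ × ℝ =>
        (a * (-(z.1) / 2 + a * b * e ^ 2 / (2 * (a * d - b * c) ^ 2)) +
            b * ((z.2 + z.1 ^ 2 / 4) * (a * d - b * c) ^ 2 / (b ^ 2 * e ^ 2) -
              a ^ 2 * e ^ 2 / (4 * (a * d - b * c) ^ 2)),
          c * (-(z.1) / 2 + a * b * e ^ 2 / (2 * (a * d - b * c) ^ 2)) +
            d * ((z.2 + z.1 ^ 2 / 4) * (a * d - b * c) ^ 2 / (b ^ 2 * e ^ 2) -
              a ^ 2 * e ^ 2 / (4 * (a * d - b * c) ^ 2)) + f))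
      ?_ ?_ ?_ ?_
    · intro z; rw [Prod.ext_iff]; constructor <;> simp only <;> first | rfl | (field_simp; ring) | field_simp
    · intro z; rw [Prod.ext_iff]; constructor <;> simp only <;> first | rfl | (field_simp; ring) | field_simp
    · fun_prop (disch := (intros; first | assumption | norm_num))
    · fun_prop (disch := (intros; first | assumption | norm_num))
  · funext z
    simp only [Function.comp_apply]
    rw [Prod.ext_iff]
    constructor <;> simp only <;> first | rfl | (field_simp; ring) | field_simp

set_option maxHeartbeats 2000000 in
theorem stmt_4 (p₁ p₂ : ℝ × ℝ) (hp : Xor' (p₁.1 = p₂.1) (p₁.2 = p₂.2))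
    (A : Matrix (Fin 2) (Fin 2) ℝ) (hA : ∀ i j, A i j ≠ 0) (hrank : A.rank = 2) :
    AEquiv (Gmap p₁ p₂ A) (fun z => (z.1, z.1 * z.2 ^ 2 + z.2 ^ 4)) := by
  have hdet : A.det ≠ 0 := by
    intro h0
    obtain ⟨v, hv, hAv⟩ := (Matrix.exists_mulVec_eq_zero_iff).mpr h0
    have hsurj : Function.Surjective A.mulVecLin := by
      rw [← LinearMap.range_eq_top]
      apply Submodule.eq_top_of_finrank_eq
      rw [show Module.finrank ℝ (LinearMap.range A.mulVecLin) = A.rank from rfl, hrank]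
      simp
    have hinj := (LinearMap.injective_iff_surjective (f := A.mulVecLin)).mpr hsurj
    exact hv (hinj (by simpa [Matrix.mulVecLin_apply] using hAv))
  have hD : A 0 0 * A 1 1 - A 0 1 * A 1 0 ≠ 0 := by
    rwa [Matrix.det_fin_two] at hdet
  rcases hp with ⟨h1, h2⟩ | ⟨h2, h1⟩
  · -- p₁.1 = p₂.1, p₁.2 ≠ p₂.2
    have hδ : p₁.2 - p₂.2 ≠ 0 := sub_ne_zero.mpr h2
    refine aequiv_precomp (Φ₀ := fun z : ℝ × ℝ => (z.1 + p₁.1, z.2 + p₁.2)) ?_ ?_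
    · exact isDiffeo_mk _ (fun z : ℝ × ℝ => (z.1 - p₁.1, z.2 - p₁.2))
        (fun z => by simp) (fun z => by simp)
        (by fun_prop) (by fun_prop)
    · have hkey := key (A 0 0) (A 0 1) (A 1 0) (A 1 1)
        (2 * (A 1 1) * (p₁.2 - p₂.2)) (A 1 1 * (p₁.2 - p₂.2) ^ 2)
        (hA 0 0) (hA 0 1) (by exact mul_ne_zero (mul_ne_zero two_ne_zero (hA 1 1)) hδ) hD
      have heq : (Gmap p₁ p₂ A) ∘ (fun z : ℝ × ℝ => (z.1 + p₁.1, z.2 + p₁.2)) =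
          (fun z : ℝ × ℝ => (A 0 0 * z.1 ^ 2 + A 0 1 * z.2 ^ 2,
            A 1 0 * z.1 ^ 2 + A 1 1 * z.2 ^ 2 +
              2 * (A 1 1) * (p₁.2 - p₂.2) * z.2 + A 1 1 * (p₁.2 - p₂.2) ^ 2)) := by
        funext z
        simp only [Gmap, Function.comp_apply, ← h1]
        rw [Prod.ext_iff]
        constructor <;> simp only <;> ring
      rw [heq]
      exact hkey
  · -- p₁.2 = p₂.2, p₁.1 ≠ p₂.1
    have hδ : p₁.1 - p₂.1 ≠ 0 := sub_ne_zero.mpr h1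
    refine aequiv_precomp (Φ₀ := fun z : ℝ × ℝ => (z.2 + p₁.1, z.1 + p₁.2)) ?_ ?_
    · exact isDiffeo_mk _ (fun z : ℝ × ℝ => (z.2 - p₁.2, z.1 - p₁.1))
        (fun z => by simp) (fun z => by simp)
        (by fun_prop) (by fun_prop)
    · have hkey := key (A 0 1) (A 0 0) (A 1 1) (A 1 0)
        (2 * (A 1 0) * (p₁.1 - p₂.1)) (A 1 0 * (p₁.1 - p₂.1) ^ 2)
        (hA 0 1) (hA 0 0) (by exact mul_ne_zero (mul_ne_zero two_ne_zero (hA 1 0)) hδ)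
        (by intro h; apply hD; linarith [h])
      have heq : (Gmap p₁ p₂ A) ∘ (fun z : ℝ × ℝ => (z.2 + p₁.1, z.1 + p₁.2)) =
          (fun z : ℝ × ℝ => (A 0 1 * z.1 ^ 2 + A 0 0 * z.2 ^ 2,
            A 1 1 * z.1 ^ 2 + A 1 0 * z.2 ^ 2 +
              2 * (A 1 0) * (p₁.1 - p₂.1) * z.2 + A 1 0 * (p₁.1 - p₂.1) ^ 2)) := by
        funext z
        simp only [Gmap, Function.comp_apply, ← h2]
        rw [Prod.ext_iff]
        constructor <;> simp only <;> ring
      rw [heq]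
      exact hkey
end

section
/- Let q, a, b be real numbers with q ≠ 0, a > 0, b > 0 and a ≠ b. Then the map H₁ : ℝ² → ℝ² defined by H₁(x, y) = ((x − q)² + y², a x² + b y²) is A-equivalent to the map U(x, y) = (x, x y² + y⁴). -/
open Matrix

noncomputable def pAux (q a b : ℝ) (w : ℝ × ℝ) : ℝ :=
  (-((a-b)^3/(4*a^2*q^2))*w.1 - (b^2-a^2)/(2*a))/((a-b)^2/(2*a^2*q^2))

noncomputable def uAux (q a b : ℝ) (w : ℝ × ℝ) : ℝ :=
  (-((a-b)^3/(4*a^2*q^2))*w.2 + ((b-a)*q^2/4 + pAux q a b w*(a+b)/(2*a)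
    + (b-a)*(pAux q a b w)^2/(4*a^2*q^2)) - pAux q a b w)/(b-a)

noncomputable def psiF (q a b : ℝ) (w : ℝ × ℝ) : ℝ × ℝ :=
  (((a-b)^2/(2*a^2*q^2)*(a*w.1 - w.2) + (b^2-a^2)/(2*a))/(-((a-b)^3/(4*a^2*q^2))),
   (b*w.1 - w.2 - ((b-a)*q^2/4 + (a*w.1 - w.2)*(a+b)/(2*a)
     + (b-a)*(a*w.1 - w.2)^2/(4*a^2*q^2)))/(-((a-b)^3/(4*a^2*q^2))))

noncomputable def psiInv (q a b : ℝ) (w : ℝ × ℝ) : ℝ × ℝ :=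
  (uAux q a b w, a * uAux q a b w - pAux q a b w)

set_option maxHeartbeats 1000000 in
theorem stmt_5 (q a b : ℝ) (hq : q ≠ 0) (ha : 0 < a) (hb : 0 < b) (hab : a ≠ b) :
    AEquiv (fun z => ((z.1 - q) ^ 2 + z.2 ^ 2, a * z.1 ^ 2 + b * z.2 ^ 2))
      (fun z => (z.1, z.1 * z.2 ^ 2 + z.2 ^ 4)) := by
  have ha0 : a ≠ 0 := ha.ne'
  have hd : a - b ≠ 0 := sub_ne_zero.mpr hab
  have hd' : b - a ≠ 0 := sub_ne_zero.mpr hab.symm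
  have hCne : -((a-b)^3/(4*a^2*q^2)) ≠ 0 :=
    neg_ne_zero.mpr (div_ne_zero (pow_ne_zero _ hd) (by positivity))
  have htne : (a-b)^2/(2*a^2*q^2) ≠ 0 := div_ne_zero (pow_ne_zero _ hd) (by positivity)
  refine ⟨fun z => (q*b/(b-a) + (a-b)/(4*a*q)*z.1 + (a-b)/(2*a*q)*z.2^2, z.2),
    psiF q a b,
    ⟨⟨_, fun w => (4*a*b*q^2/(a-b)^2 + 4*a*q/(a-b)*w.1 - 2*w.2^2, w.2), ?_, ?_⟩,
      rfl, ?_, ?_⟩,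
    ⟨⟨_, psiInv q a b, ?_, ?_⟩, rfl, ?_, ?_⟩, ?_⟩
  · intro z; refine Prod.ext ?_ rfl; show _ = z.1; field_simp; ring
  · intro z; refine Prod.ext ?_ rfl; show _ = z.1; field_simp; ring
  · simp only [Equiv.coe_fn_mk]; fun_prop
  · simp only [Equiv.coe_fn_symm_mk]; fun_prop
  · intro z
    simp only [psiF, psiInv, uAux, pAux]
    refine Prod.ext ?_ ?_
    · show _ = z.1; field_simp; ring
    · show _ = z.2; field_simp; ring
  · intro z
    show psiF q a b (psiInv q a b z) = z
    simp only [psiF, psiInv, uAux]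
    set p := pAux q a b z with hp
    set R := (b-a)*q^2/4 + p*(a+b)/(2*a) + (b-a)*p^2/(4*a^2*q^2) with hR
    set C := -((a-b)^3/(4*a^2*q^2)) with hC
    set s := (b^2-a^2)/(2*a) with hs
    set t := (a-b)^2/(2*a^2*q^2) with ht
    set u := (C*z.2 + R - p)/(b-a) with hu
    refine Prod.ext ?_ ?_
    · show (t*(a*u - (a*u - p)) + s)/C = z.1
      rw [show t*(a*u - (a*u - p)) + s = t*p + s by ring, hp, pAux, ← hC, ← hs, ← ht]
      field_simp
      ring
    · show (b*u - (a*u - p) - ((b-a)*q^2/4 + (a*u - (a*u - p))*(a+b)/(2*a)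
        + (b-a)*(a*u - (a*u - p))^2/(4*a^2*q^2)))/C = z.2
      rw [show a*u - (a*u - p) = p by ring, ← hR, hu]
      field_simp
      ring
  · simp only [Equiv.coe_fn_mk, psiF]
    fun_prop (disch := intros; first | exact hCne | exact htne | exact hd' | exact hd | positivity)
  · simp only [Equiv.coe_fn_symm_mk]; unfold psiInv uAux pAux
    fun_prop (disch := intros; first | exact hCne | exact htne | exact hd' | exact hd | positivity)
  · funext z
    simp only [Function.comp_apply, psiF]
    refine Prod.ext ?_ ?_
    · show _ = z.1; field_simp; ring
    · show _ = z.1 * z.2^2 + z.2^4; field_simp; ring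
end

section
/- Let f₁ = φ(·; μ₁, Σ₁) and f₂ = φ(·; μ₂, Σ₂) be bivariate normal densities with μ₁ ≠ μ₂ and with Σ₁, Σ₂ proportional (Σ₁ = cΣ₂ for some c > 0). Then the map L = (log ∘ f₁, log ∘ f₂) : ℝ² → ℝ² is A-equivalent to the map (x, y) ↦ (x, y²). -/
open Matrix

noncomputable section AuxStmt8

private lemma log_gauss_aux (μ : Fin 2 → ℝ) (V : Matrix (Fin 2) (Fin 2) ℝ) (hV : 0 < V.det)
    (z : ℝ × ℝ) :
    Real.log (gauss μ V z) = -(Real.log (2*Real.pi*Real.sqrt V.det))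
      + (-(1/2) * ((z.1-μ 0) * (V⁻¹ 0 0 * (z.1-μ 0) + V⁻¹ 0 1 * (z.2-μ 1))
         + (z.2-μ 1) * (V⁻¹ 1 0 * (z.1-μ 0) + V⁻¹ 1 1 * (z.2-μ 1)))) := by
  have hpos : 0 < 2*Real.pi*Real.sqrt V.det :=
    mul_pos (by positivity) (Real.sqrt_pos.mpr hV)
  unfold gauss
  rw [Real.log_mul (inv_ne_zero hpos.ne') (Real.exp_ne_zero _), Real.log_inv, Real.log_exp]
  congr 1
  simp [dotProduct, Matrix.mulVec, Fin.sum_univ_two]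

private lemma rot_norm_aux (ρ e1 e2 x y : ℝ) (hρ : ρ ≠ 0) (hρ2 : ρ * ρ = e1^2 + e2^2) :
    ((e1*x - e2*y)*ρ⁻¹)^2 + ((e2*x + e1*y)*ρ⁻¹)^2 = x^2 + y^2 := by
  field_simp
  linear_combination (-(x^2+y^2)) * hρ2

private lemma quad0_aux (s t u ρ e1 e2 x y : ℝ) (hs : s ≠ 0) (hu : u ≠ 0) (hρ : ρ ≠ 0)
    (hρ2 : ρ * ρ = e1^2 + e2^2) :
    (((e1*x - e2*y)*ρ⁻¹ - t*(((e2*x + e1*y)*ρ⁻¹)*u⁻¹))*s⁻¹)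
        * (s*s*((((e1*x - e2*y)*ρ⁻¹ - t*(((e2*x + e1*y)*ρ⁻¹)*u⁻¹))*s⁻¹))
           + s*t*(((e2*x + e1*y)*ρ⁻¹)*u⁻¹))
      + (((e2*x + e1*y)*ρ⁻¹)*u⁻¹)
        * (s*t*((((e1*x - e2*y)*ρ⁻¹ - t*(((e2*x + e1*y)*ρ⁻¹)*u⁻¹))*s⁻¹))
           + (t*t+u*u)*(((e2*x + e1*y)*ρ⁻¹)*u⁻¹))
      = x^2 + y^2 := by
  have h1 : (((e1*x - e2*y)*ρ⁻¹ - t*(((e2*x + e1*y)*ρ⁻¹)*u⁻¹))*s⁻¹)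
        * (s*s*((((e1*x - e2*y)*ρ⁻¹ - t*(((e2*x + e1*y)*ρ⁻¹)*u⁻¹))*s⁻¹))
           + s*t*(((e2*x + e1*y)*ρ⁻¹)*u⁻¹))
      + (((e2*x + e1*y)*ρ⁻¹)*u⁻¹)
        * (s*t*((((e1*x - e2*y)*ρ⁻¹ - t*(((e2*x + e1*y)*ρ⁻¹)*u⁻¹))*s⁻¹))
           + (t*t+u*u)*(((e2*x + e1*y)*ρ⁻¹)*u⁻¹))
      = ((e1*x - e2*y)*ρ⁻¹)^2 + ((e2*x + e1*y)*ρ⁻¹)^2 := by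
    field_simp
    ring
  rw [h1, rot_norm_aux ρ e1 e2 x y hρ hρ2]

private lemma shift_norm_aux (ρ e1 e2 x y : ℝ) (hρ : ρ ≠ 0) (hρ2 : ρ * ρ = e1^2 + e2^2) :
    ((e1*x - e2*y)*ρ⁻¹ - e1)^2 + ((e2*x + e1*y)*ρ⁻¹ - e2)^2
      = x^2 + y^2 - 2*ρ*x + ρ^2 := by
  field_simp
  linear_combination (-(x^2+y^2-2*ρ*x+ρ^2)) * hρ2

private lemma quad1_aux (s t u ρ e1 e2 d0 d1 x y : ℝ) (hs : s ≠ 0) (hu : u ≠ 0) (hρ : ρ ≠ 0)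
    (he1 : e1 = s*d0 + t*d1) (he2 : e2 = u*d1)
    (hρ2 : ρ * ρ = e1^2 + e2^2) :
    (((e1*x - e2*y)*ρ⁻¹ - t*(((e2*x + e1*y)*ρ⁻¹)*u⁻¹))*s⁻¹ - d0)
        * (s*s*((((e1*x - e2*y)*ρ⁻¹ - t*(((e2*x + e1*y)*ρ⁻¹)*u⁻¹))*s⁻¹ - d0))
           + s*t*(((e2*x + e1*y)*ρ⁻¹)*u⁻¹ - d1))
      + (((e2*x + e1*y)*ρ⁻¹)*u⁻¹ - d1)
        * (s*t*((((e1*x - e2*y)*ρ⁻¹ - t*(((e2*x + e1*y)*ρ⁻¹)*u⁻¹))*s⁻¹ - d0))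
           + (t*t+u*u)*(((e2*x + e1*y)*ρ⁻¹)*u⁻¹ - d1))
      = x^2 + y^2 - 2*ρ*x + ρ^2 := by
  have h1 : (((e1*x - e2*y)*ρ⁻¹ - t*(((e2*x + e1*y)*ρ⁻¹)*u⁻¹))*s⁻¹ - d0)
        * (s*s*((((e1*x - e2*y)*ρ⁻¹ - t*(((e2*x + e1*y)*ρ⁻¹)*u⁻¹))*s⁻¹ - d0))
           + s*t*(((e2*x + e1*y)*ρ⁻¹)*u⁻¹ - d1))
      + (((e2*x + e1*y)*ρ⁻¹)*u⁻¹ - d1)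
        * (s*t*((((e1*x - e2*y)*ρ⁻¹ - t*(((e2*x + e1*y)*ρ⁻¹)*u⁻¹))*s⁻¹ - d0))
           + (t*t+u*u)*(((e2*x + e1*y)*ρ⁻¹)*u⁻¹ - d1))
      = ((e1*x - e2*y)*ρ⁻¹ - e1)^2 + ((e2*x + e1*y)*ρ⁻¹ - e2)^2 := by
    subst he1 he2
    field_simp
    ring
  rw [h1, shift_norm_aux ρ e1 e2 x y hρ hρ2]

end AuxStmt8

theorem stmt_8 (μ₁ μ₂ : Fin 2 → ℝ) (V₁ V₂ : Matrix (Fin 2) (Fin 2) ℝ)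
    (h₁ : V₁.PosDef) (h₂ : V₂.PosDef) (hμ : μ₁ ≠ μ₂) (hprop : Proportional V₁ V₂) :
    AEquiv (fun z => (Real.log (gauss μ₁ V₁ z), Real.log (gauss μ₂ V₂ z)))
      (fun z => (z.1, z.2 ^ 2)) := by
  classical
  obtain ⟨c, hc, hV⟩ := hprop
  have hdet1 : 0 < V₁.det := h₁.det_pos
  have hdet2 : 0 < V₂.det := h₂.det_pos
  have hAone : V₂ * V₂⁻¹ = 1 := Matrix.mul_nonsing_inv _ (isUnit_iff_ne_zero.mpr hdet2.ne')
  have hV1inv : V₁⁻¹ = c⁻¹ • V₂⁻¹ := by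
    apply Matrix.inv_eq_right_inv
    rw [hV, Matrix.smul_mul, Matrix.mul_smul, smul_smul, mul_inv_cancel₀ hc.ne', one_smul, hAone]
  have hApd : (V₂⁻¹).PosDef := h₂.inv
  have hP : 0 < V₂⁻¹ 0 0 := by
    have hx : (![1,0] : Fin 2 → ℝ) ≠ 0 := by
      intro h; simpa using congrFun h 0
    have := hApd.dotProduct_mulVec_pos hx
    simpa [dotProduct, Matrix.mulVec, Fin.sum_univ_two] using this
  have hsym : V₂⁻¹ 1 0 = V₂⁻¹ 0 1 := by
    simpa using hApd.1.apply 0 1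
  have hdetA : 0 < (V₂⁻¹).det := hApd.det_pos
  have hdet2x2 : (V₂⁻¹).det = V₂⁻¹ 0 0 * V₂⁻¹ 1 1 - V₂⁻¹ 0 1 * V₂⁻¹ 1 0 :=
    Matrix.det_fin_two _
  obtain ⟨s, hs0, hs2⟩ : ∃ s : ℝ, 0 < s ∧ s * s = V₂⁻¹ 0 0 :=
    ⟨Real.sqrt (V₂⁻¹ 0 0), Real.sqrt_pos.mpr hP, Real.mul_self_sqrt hP.le⟩
  obtain ⟨t, ht⟩ : ∃ t : ℝ, s * t = V₂⁻¹ 0 1 :=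
    ⟨V₂⁻¹ 0 1 / s, by field_simp⟩
  obtain ⟨u, hu0, hu2⟩ : ∃ u : ℝ, 0 < u ∧ u * u = (V₂⁻¹).det / (V₂⁻¹ 0 0) :=
    ⟨Real.sqrt _, Real.sqrt_pos.mpr (div_pos hdetA hP), Real.mul_self_sqrt (div_pos hdetA hP).le⟩
  have hr : t * t + u * u = V₂⁻¹ 1 1 := by
    rw [hu2, hdet2x2, hsym, ← ht, ← hs2]
    field_simp
    try ring
  obtain ⟨e1, he1⟩ : ∃ a : ℝ, a = s*(μ₁ 0 - μ₂ 0) + t*(μ₁ 1 - μ₂ 1) := ⟨_, rfl⟩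
  obtain ⟨e2, he2⟩ : ∃ a : ℝ, a = u*(μ₁ 1 - μ₂ 1) := ⟨_, rfl⟩
  have hee : 0 < e1^2 + e2^2 := by
    by_cases h1 : μ₁ 1 - μ₂ 1 = 0
    · have h0 : μ₁ 0 - μ₂ 0 ≠ 0 := by
        intro h0
        apply hμ
        funext i
        fin_cases i
        · exact sub_eq_zero.mp h0
        · exact sub_eq_zero.mp h1
      have he1ne : e1 ≠ 0 := by
        rw [he1, h1]
        simpa using mul_ne_zero hs0.ne' h0
      have h2' : 0 < e1^2 := lt_of_le_of_ne (sq_nonneg e1) (Ne.symm (pow_ne_zero 2 he1ne))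
      linarith [sq_nonneg e2]
    · have he2ne : e2 ≠ 0 := by
        rw [he2]; exact mul_ne_zero hu0.ne' h1
      have h2' : 0 < e2^2 := lt_of_le_of_ne (sq_nonneg e2) (Ne.symm (pow_ne_zero 2 he2ne))
      linarith [sq_nonneg e1]
  obtain ⟨ρ, hρ0, hρ2⟩ : ∃ r : ℝ, 0 < r ∧ r * r = e1^2 + e2^2 :=
    ⟨Real.sqrt _, Real.sqrt_pos.mpr hee, Real.mul_self_sqrt hee.le⟩
  obtain ⟨k₁, hk₁⟩ : ∃ k : ℝ, k = -(Real.log (2*Real.pi*Real.sqrt V₁.det)) := ⟨_, rfl⟩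
  obtain ⟨k₂, hk₂⟩ : ∃ k : ℝ, k = -(Real.log (2*Real.pi*Real.sqrt V₂.det)) := ⟨_, rfl⟩
  obtain ⟨Φ, hΦ⟩ : ∃ f : ℝ × ℝ → ℝ × ℝ, f = fun p =>
    ( ((e1*p.1 - e2*p.2)*ρ⁻¹ - t*(((e2*p.1 + e1*p.2)*ρ⁻¹)*u⁻¹))*s⁻¹ + μ₂ 0,
      ((e2*p.1 + e1*p.2)*ρ⁻¹)*u⁻¹ + μ₂ 1 ) := ⟨_, rfl⟩
  obtain ⟨Φinv, hΦinv⟩ : ∃ f : ℝ × ℝ → ℝ × ℝ, f = fun q =>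
    ( (e1*(s*(q.1 - μ₂ 0) + t*(q.2 - μ₂ 1)) + e2*(u*(q.2 - μ₂ 1)))*ρ⁻¹,
      (-e2*(s*(q.1 - μ₂ 0) + t*(q.2 - μ₂ 1)) + e1*(u*(q.2 - μ₂ 1)))*ρ⁻¹ ) := ⟨_, rfl⟩
  obtain ⟨Ψ, hΨ⟩ : ∃ f : ℝ × ℝ → ℝ × ℝ, f = fun p =>
    ( (-2*(p.2 - k₂) - (-2*c*(p.1 - k₁)) + ρ^2) * (2*ρ)⁻¹,
      -2*(p.2 - k₂) - ((-2*(p.2 - k₂) - (-2*c*(p.1 - k₁)) + ρ^2) * (2*ρ)⁻¹)^2 ) := ⟨_, rfl⟩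
  obtain ⟨Ψinv, hΨinv⟩ : ∃ f : ℝ × ℝ → ℝ × ℝ, f = fun q =>
    ( k₁ - ((q.2 + q.1^2) - 2*ρ*q.1 + ρ^2) * (2*c)⁻¹, k₂ - (q.2 + q.1^2) * 2⁻¹ ) := ⟨_, rfl⟩
  refine ⟨Φ, Ψ, ⟨⟨Φ, Φinv, ?_, ?_⟩, rfl, ?_, ?_⟩, ⟨⟨Ψ, Ψinv, ?_, ?_⟩, rfl, ?_, ?_⟩, ?_⟩
  · -- left inverse of Φ
    intro p
    obtain ⟨x, y⟩ := p
    simp only [hΦ, hΦinv, Prod.mk.injEq]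
    constructor
    · field_simp
      linear_combination (-(x * u)) * hρ2
    · field_simp
      linear_combination (-(y * u)) * hρ2
  · -- right inverse of Φ
    intro q
    obtain ⟨x, y⟩ := q
    simp only [hΦ, hΦinv, Prod.mk.injEq]
    constructor
    · field_simp
      linear_combination (-((x - μ₂ 0) * s * u)) * hρ2
    · field_simp
      linear_combination (-((y - μ₂ 1) * u)) * hρ2
  · simp only [Equiv.coe_fn_mk, hΦ]; fun_prop
  · simp only [Equiv.coe_fn_symm_mk, hΦinv]; fun_prop
  · -- left inverse of Ψ
    intro p
    obtain ⟨x, y⟩ := p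
    simp only [hΨ, hΨinv, Prod.mk.injEq]
    constructor
    · field_simp
      ring
    · field_simp
      ring
  · -- right inverse of Ψ
    intro q
    obtain ⟨x, y⟩ := q
    simp only [hΨ, hΨinv, Prod.mk.injEq]
    constructor
    · field_simp
      ring
    · field_simp
      ring
  · simp only [Equiv.coe_fn_mk, hΨ]; fun_prop
  · simp only [Equiv.coe_fn_symm_mk, hΨinv]; fun_prop
  · -- the composite equality
    funext p
    obtain ⟨x, y⟩ := p
    have Hb := quad0_aux s t u ρ e1 e2 x y hs0.ne' hu0.ne' hρ0.ne' hρ2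
    have Ha := quad1_aux s t u ρ e1 e2 (μ₁ 0 - μ₂ 0) (μ₁ 1 - μ₂ 1) x y
      hs0.ne' hu0.ne' hρ0.ne' he1 he2 hρ2
    have H2 : Real.log (gauss μ₂ V₂ (Φ (x, y))) = k₂ - (1/2)*(x^2+y^2) := by
      rw [log_gauss_aux μ₂ V₂ hdet2, hsym, ← hs2, ← ht, ← hr]
      simp only [hΦ]
      linear_combination (-(1/2)) * Hb - hk₂
    have H1 : Real.log (gauss μ₁ V₁ (Φ (x, y)))
        = k₁ - (1/2)*(c⁻¹*(x^2 + y^2 - 2*ρ*x + ρ^2)) := by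
      rw [log_gauss_aux μ₁ V₁ hdet1, hV1inv]
      simp only [Matrix.smul_apply, smul_eq_mul]
      rw [hsym, ← hs2, ← ht, ← hr]
      simp only [hΦ]
      linear_combination (-(1/2)*c⁻¹) * Ha - hk₁
    simp only [Function.comp_apply]
    rw [H1, H2]
    simp only [hΨ, Prod.mk.injEq]
    constructor
    · field_simp
      ring
    · field_simp
      ring
end

section
/- Let f₁ = φ(·; μ₁, Σ₁) and f₂ = φ(·; μ₂, Σ₂) be bivariate normal densities with μ₁ ≠ μ₂, with Σ₁ and Σ₂ not proportional, and with f₁ and f₂ codirectional. Then the map L = (log ∘ f₁, log ∘ f₂) : ℝ² → ℝ² is A-equivalent to the map (x, y) ↦ (x, x y² + y⁴). -/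
open Matrix

section Helpers

lemma isDiffeo_mk_s9 (f g : ℝ × ℝ → ℝ × ℝ) (h1 : Function.LeftInverse g f)
    (h2 : Function.RightInverse g f) (hf : ContDiff ℝ (⊤ : ℕ∞) f) (hg : ContDiff ℝ (⊤ : ℕ∞) g) :
    IsDiffeo f :=
  ⟨⟨f, g, h1, h2⟩, rfl, hf, hg⟩

lemma isDiffeo_id : IsDiffeo (id : ℝ × ℝ → ℝ × ℝ) :=
  ⟨Equiv.refl _, rfl, contDiff_id, contDiff_id⟩

lemma IsDiffeo.comp {f g : ℝ × ℝ → ℝ × ℝ} (hf : IsDiffeo f) (hg : IsDiffeo g) :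
    IsDiffeo (f ∘ g) := by
  obtain ⟨e, he, hce, hce'⟩ := hf
  obtain ⟨e', he', hcg, hcg'⟩ := hg
  refine ⟨e'.trans e, ?_, ?_, ?_⟩
  · funext z; simp [Equiv.trans, he, he']
  · exact hce.comp hcg
  · exact hcg'.comp hce'

lemma AEquiv.trans {F G H : ℝ × ℝ → ℝ × ℝ} (h1 : AEquiv F G) (h2 : AEquiv G H) :
    AEquiv F H := by
  obtain ⟨Φ, Ψ, hΦ, hΨ, hFG⟩ := h1
  obtain ⟨Φ', Ψ', hΦ', hΨ', hGH⟩ := h2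
  refine ⟨Φ ∘ Φ', Ψ' ∘ Ψ, hΦ.comp hΦ', hΨ'.comp hΨ, ?_⟩
  rw [← hGH, ← hFG]
  rfl

lemma aequiv_step (F G Φ Ψ : ℝ × ℝ → ℝ × ℝ) (hΦ : IsDiffeo Φ) (hΨ : IsDiffeo Ψ)
    (h : ∀ z, Ψ (F (Φ z)) = G z) : AEquiv F G :=
  ⟨Φ, Ψ, hΦ, hΨ, funext h⟩

lemma matrix_eq_zero_of (M : Matrix (Fin 2) (Fin 2) ℝ) (d0 d1 : ℝ) (hD : d0 ^ 2 + d1 ^ 2 ≠ 0)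
    (h1 : M *ᵥ ![d0, d1] = 0) (h2 : M *ᵥ ![-d1, d0] = 0) : M = 0 := by
  have F1 := congrFun h1 0
  have F2 := congrFun h1 1
  have F3 := congrFun h2 0
  have F4 := congrFun h2 1
  simp [Matrix.mulVec, dotProduct, Fin.sum_univ_two] at F1 F2 F3 F4
  ext i j
  fin_cases i <;> fin_cases j <;> simp
  · have : M 0 0 * (d0 ^ 2 + d1 ^ 2) = 0 := by linear_combination d0 * F1 - d1 * F3
    exact (mul_eq_zero.mp this).resolve_right hD
  · have : M 0 1 * (d0 ^ 2 + d1 ^ 2) = 0 := by linear_combination d1 * F1 + d0 * F3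
    exact (mul_eq_zero.mp this).resolve_right hD
  · have : M 1 0 * (d0 ^ 2 + d1 ^ 2) = 0 := by linear_combination d0 * F2 - d1 * F4
    exact (mul_eq_zero.mp this).resolve_right hD
  · have : M 1 1 * (d0 ^ 2 + d1 ^ 2) = 0 := by linear_combination d1 * F2 + d0 * F4
    exact (mul_eq_zero.mp this).resolve_right hD

lemma log_gauss (μ : Fin 2 → ℝ) (V : Matrix (Fin 2) (Fin 2) ℝ) (hV : V.PosDef) (z : ℝ × ℝ) :
    Real.log (gauss μ V z) = Real.log ((2 * Real.pi * Real.sqrt V.det)⁻¹) +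
      (-(1 / 2) * (![z.1 - μ 0, z.2 - μ 1] ⬝ᵥ (V⁻¹ *ᵥ ![z.1 - μ 0, z.2 - μ 1]))) := by
  have hpos : (0 : ℝ) < (2 * Real.pi * Real.sqrt V.det)⁻¹ := by
    have h1 : 0 < Real.sqrt V.det := Real.sqrt_pos.mpr hV.det_pos
    have h2 : 0 < Real.pi := Real.pi_pos
    positivity
  unfold gauss
  rw [Real.log_mul hpos.ne' (Real.exp_ne_zero _), Real.log_exp]

end Helpers

set_option maxHeartbeats 1000000 in
theorem stmt_9 (μ₁ μ₂ : Fin 2 → ℝ) (V₁ V₂ : Matrix (Fin 2) (Fin 2) ℝ)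
    (h₁ : V₁.PosDef) (h₂ : V₂.PosDef) (hμ : μ₁ ≠ μ₂)
    (hprop : ¬ Proportional V₁ V₂) (hcod : Codirectional μ₁ μ₂ V₁ V₂) :
    AEquiv (fun z => (Real.log (gauss μ₁ V₁ z), Real.log (gauss μ₂ V₂ z)))
      (fun z => (z.1, z.1 * z.2 ^ 2 + z.2 ^ 4)) := by
  classical
  obtain ⟨a, b, had, hbd⟩ := hcod
  obtain ⟨d0, hd0⟩ : ∃ x : ℝ, x = μ₁ 0 - μ₂ 0 := ⟨_, rfl⟩
  obtain ⟨d1, hd1⟩ : ∃ x : ℝ, x = μ₁ 1 - μ₂ 1 := ⟨_, rfl⟩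
  have hne : ¬ (d0 = 0 ∧ d1 = 0) := by
    rintro ⟨h0, h1⟩
    apply hμ
    funext i
    fin_cases i
    · show μ₁ 0 = μ₂ 0
      rw [hd0] at h0; linarith
    · show μ₁ 1 = μ₂ 1
      rw [hd1] at h1; linarith
  obtain ⟨D, hDdef⟩ : ∃ x : ℝ, x = d0 ^ 2 + d1 ^ 2 := ⟨_, rfl⟩
  have hD : 0 < D := by
    rcases not_and_or.mp hne with h | h <;> rw [hDdef] <;> positivity
  have hDne : D ≠ 0 := hD.ne'
  obtain ⟨dv, hdvdef⟩ : ∃ x : Fin 2 → ℝ, x = ![d0, d1] := ⟨_, rfl⟩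
  obtain ⟨pv, hpvdef⟩ : ∃ x : Fin 2 → ℝ, x = ![-d1, d0] := ⟨_, rfl⟩
  have hsub : μ₁ - μ₂ = dv := by
    funext i
    fin_cases i
    · simp [hdvdef, hd0]
    · simp [hdvdef, hd1]
  rw [hsub] at had hbd
  have hdvne : dv ≠ 0 := by
    intro h
    apply hne
    constructor
    · simpa [hdvdef] using congrFun h 0
    · simpa [hdvdef] using congrFun h 1
  have hpvne : pv ≠ 0 := by
    intro h
    apply hne
    constructor
    · simpa [hpvdef] using congrFun h 1
    · simpa [hpvdef, neg_eq_zero] using congrFun h 0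
  have hdd : dv ⬝ᵥ dv = D := by
    rw [hDdef]; simp [hdvdef, dotProduct, Fin.sum_univ_two]; ring
  have hpp : pv ⬝ᵥ pv = D := by
    rw [hDdef]; simp [hpvdef, dotProduct, Fin.sum_univ_two]; ring
  have hdp : dv ⬝ᵥ pv = 0 := by
    simp [hdvdef, hpvdef, dotProduct, Fin.sum_univ_two]; ring
  have hpd : pv ⬝ᵥ dv = 0 := by
    simp [hdvdef, hpvdef, dotProduct, Fin.sum_univ_two]; ring
  have hsym1 : V₁ 1 0 = V₁ 0 1 := by
    have h := Matrix.IsHermitian.apply h₁.1 1 0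
    simpa using h.symm
  have hsym2 : V₂ 1 0 = V₂ 0 1 := by
    have h := Matrix.IsHermitian.apply h₂.1 1 0
    simpa using h.symm
  have E1 : V₁ 0 0 * d0 + V₁ 0 1 * d1 = a * d0 := by
    have h := congrFun had 0
    simp [hdvdef, Matrix.mulVec, dotProduct, Fin.sum_univ_two] at h
    linear_combination h
  have E2 : V₁ 0 1 * d0 + V₁ 1 1 * d1 = a * d1 := by
    have h := congrFun had 1
    simp [hdvdef, Matrix.mulVec, dotProduct, Fin.sum_univ_two, hsym1] at h
    linear_combination h
  have F1 : V₂ 0 0 * d0 + V₂ 0 1 * d1 = b * d0 := by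
    have h := congrFun hbd 0
    simp [hdvdef, Matrix.mulVec, dotProduct, Fin.sum_univ_two] at h
    linear_combination h
  have F2 : V₂ 0 1 * d0 + V₂ 1 1 * d1 = b * d1 := by
    have h := congrFun hbd 1
    simp [hdvdef, Matrix.mulVec, dotProduct, Fin.sum_univ_two, hsym2] at h
    linear_combination h
  obtain ⟨s₁, hs₁def⟩ : ∃ x : ℝ, x = V₁ 0 0 * d1 ^ 2 - 2 * V₁ 0 1 * d0 * d1 + V₁ 1 1 * d0 ^ 2 := ⟨_, rfl⟩
  obtain ⟨s₂, hs₂def⟩ : ∃ x : ℝ, x = V₂ 0 0 * d1 ^ 2 - 2 * V₂ 0 1 * d0 * d1 + V₂ 1 1 * d0 ^ 2 := ⟨_, rfl⟩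
  have hp₁ : D • (V₁ *ᵥ pv) = s₁ • pv := by
    funext i
    fin_cases i
    · simp [hpvdef, Matrix.mulVec, dotProduct, Fin.sum_univ_two, hs₁def, hDdef]
      linear_combination d0 ^ 2 * E2 - d0 * d1 * E1
    · simp [hpvdef, Matrix.mulVec, dotProduct, Fin.sum_univ_two, hs₁def, hDdef, hsym1]
      linear_combination d0 * d1 * E2 - d1 ^ 2 * E1
  have hp₂ : D • (V₂ *ᵥ pv) = s₂ • pv := by
    funext i
    fin_cases i
    · simp [hpvdef, Matrix.mulVec, dotProduct, Fin.sum_univ_two, hs₂def, hDdef]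
      linear_combination d0 ^ 2 * F2 - d0 * d1 * F1
    · simp [hpvdef, Matrix.mulVec, dotProduct, Fin.sum_univ_two, hs₂def, hDdef, hsym2]
      linear_combination d0 * d1 * F2 - d1 ^ 2 * F1
  -- positivity of eigenvalues
  have ha : 0 < a := by
    have h : 0 < dv ⬝ᵥ (V₁ *ᵥ dv) := by simpa using h₁.dotProduct_mulVec_pos hdvne
    have h2 : dv ⬝ᵥ (V₁ *ᵥ dv) = a * D := by
      rw [had, dotProduct_smul, hdd]; simp [smul_eq_mul]
    rw [h2] at h
    nlinarith [hD, h]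
  have hb : 0 < b := by
    have h : 0 < dv ⬝ᵥ (V₂ *ᵥ dv) := by simpa using h₂.dotProduct_mulVec_pos hdvne
    have h2 : dv ⬝ᵥ (V₂ *ᵥ dv) = b * D := by
      rw [hbd, dotProduct_smul, hdd]; simp [smul_eq_mul]
    rw [h2] at h
    nlinarith [hD, h]
  have hs₁pos : 0 < s₁ := by
    have h : 0 < pv ⬝ᵥ (V₁ *ᵥ pv) := by simpa using h₁.dotProduct_mulVec_pos hpvne
    have h2 : pv ⬝ᵥ (D • (V₁ *ᵥ pv)) = pv ⬝ᵥ (s₁ • pv) := by rw [hp₁]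
    rw [dotProduct_smul, dotProduct_smul, hpp] at h2
    simp only [smul_eq_mul] at h2
    have h3 : s₁ = pv ⬝ᵥ (V₁ *ᵥ pv) := by
      apply mul_left_cancel₀ hDne
      linear_combination -h2
    rw [h3]; exact h
  have hs₂pos : 0 < s₂ := by
    have h : 0 < pv ⬝ᵥ (V₂ *ᵥ pv) := by simpa using h₂.dotProduct_mulVec_pos hpvne
    have h2 : pv ⬝ᵥ (D • (V₂ *ᵥ pv)) = pv ⬝ᵥ (s₂ • pv) := by rw [hp₂]
    rw [dotProduct_smul, dotProduct_smul, hpp] at h2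
    simp only [smul_eq_mul] at h2
    have h3 : s₂ = pv ⬝ᵥ (V₂ *ᵥ pv) := by
      apply mul_left_cancel₀ hDne
      linear_combination -h2
    rw [h3]; exact h
  -- inverse matrices act on the eigenbasis
  have hinv1 : V₁⁻¹ * V₁ = 1 := Matrix.nonsing_inv_mul V₁ (isUnit_iff_ne_zero.mpr h₁.det_pos.ne')
  have hinv2 : V₂⁻¹ * V₂ = 1 := Matrix.nonsing_inv_mul V₂ (isUnit_iff_ne_zero.mpr h₂.det_pos.ne')
  have hid1 : V₁⁻¹ *ᵥ dv = a⁻¹ • dv := by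
    have h := congrArg (fun v => V₁⁻¹ *ᵥ v) had
    simp only [Matrix.mulVec_mulVec, hinv1, Matrix.one_mulVec, Matrix.mulVec_smul] at h
    have h2 := congrArg (fun v => a⁻¹ • v) h.symm
    simpa [smul_smul, inv_mul_cancel₀ ha.ne', inv_mul_cancel_left₀ ha.ne'] using h2
  have hid2 : V₂⁻¹ *ᵥ dv = b⁻¹ • dv := by
    have h := congrArg (fun v => V₂⁻¹ *ᵥ v) hbd
    simp only [Matrix.mulVec_mulVec, hinv2, Matrix.one_mulVec, Matrix.mulVec_smul] at h
    have h2 := congrArg (fun v => b⁻¹ • v) h.symm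
    simpa [smul_smul, inv_mul_cancel₀ hb.ne', inv_mul_cancel_left₀ hb.ne'] using h2
  have hip1 : V₁⁻¹ *ᵥ pv = (s₁⁻¹ * D) • pv := by
    have h := congrArg (fun v => V₁⁻¹ *ᵥ v) hp₁
    simp only [Matrix.mulVec_smul, Matrix.mulVec_mulVec, hinv1, Matrix.one_mulVec] at h
    have h2 := congrArg (fun v => s₁⁻¹ • v) h
    simp only [smul_smul, inv_mul_cancel₀ hs₁pos.ne', one_smul] at h2
    exact h2.symm
  have hip2 : V₂⁻¹ *ᵥ pv = (s₂⁻¹ * D) • pv := by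
    have h := congrArg (fun v => V₂⁻¹ *ᵥ v) hp₂
    simp only [Matrix.mulVec_smul, Matrix.mulVec_mulVec, hinv2, Matrix.one_mulVec] at h
    have h2 := congrArg (fun v => s₂⁻¹ • v) h
    simp only [smul_smul, inv_mul_cancel₀ hs₂pos.ne', one_smul] at h2
    exact h2.symm
  -- the quadratic form values in rotated coordinates
  have key₁ : ∀ s t : ℝ,
      (![(s - 1) * d0 - t * d1, (s - 1) * d1 + t * d0] : Fin 2 → ℝ) ⬝ᵥ
        (V₁⁻¹ *ᵥ ![(s - 1) * d0 - t * d1, (s - 1) * d1 + t * d0]) =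
      (s - 1) ^ 2 * (a⁻¹ * D) + t ^ 2 * (s₁⁻¹ * D ^ 2) := by
    intro s t
    have hw : (![(s - 1) * d0 - t * d1, (s - 1) * d1 + t * d0] : Fin 2 → ℝ) =
        (s - 1) • dv + t • pv := by
      funext i; fin_cases i <;> simp [hdvdef, hpvdef] <;> ring
    rw [hw, Matrix.mulVec_add, Matrix.mulVec_smul, Matrix.mulVec_smul, hid1, hip1]
    simp [add_dotProduct, dotProduct_add, smul_dotProduct,
      dotProduct_smul, hdd, hpp, hdp, hpd, smul_eq_mul]
    ring
  have key₂ : ∀ s t : ℝ,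
      (![s * d0 - t * d1, s * d1 + t * d0] : Fin 2 → ℝ) ⬝ᵥ
        (V₂⁻¹ *ᵥ ![s * d0 - t * d1, s * d1 + t * d0]) =
      s ^ 2 * (b⁻¹ * D) + t ^ 2 * (s₂⁻¹ * D ^ 2) := by
    intro s t
    have hw : (![s * d0 - t * d1, s * d1 + t * d0] : Fin 2 → ℝ) = s • dv + t • pv := by
      funext i; fin_cases i <;> simp [hdvdef, hpvdef] <;> ring
    rw [hw, Matrix.mulVec_add, Matrix.mulVec_smul, Matrix.mulVec_smul, hid2, hip2]
    simp [add_dotProduct, dotProduct_add, smul_dotProduct,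
      dotProduct_smul, hdd, hpp, hdp, hpd, smul_eq_mul]
    ring
  obtain ⟨A₁, hA₁def⟩ : ∃ x : ℝ, x = a⁻¹ * D := ⟨_, rfl⟩
  obtain ⟨A₂, hA₂def⟩ : ∃ x : ℝ, x = b⁻¹ * D := ⟨_, rfl⟩
  obtain ⟨B₁, hB₁def⟩ : ∃ x : ℝ, x = s₁⁻¹ * D ^ 2 := ⟨_, rfl⟩
  obtain ⟨B₂, hB₂def⟩ : ∃ x : ℝ, x = s₂⁻¹ * D ^ 2 := ⟨_, rfl⟩
  have hA₁pos : 0 < A₁ := by rw [hA₁def]; exact mul_pos (inv_pos.mpr ha) hD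
  have hA₂pos : 0 < A₂ := by rw [hA₂def]; exact mul_pos (inv_pos.mpr hb) hD
  have hB₁pos : 0 < B₁ := by rw [hB₁def]; exact mul_pos (inv_pos.mpr hs₁pos) (by positivity)
  have hB₂pos : 0 < B₂ := by rw [hB₂def]; exact mul_pos (inv_pos.mpr hs₂pos) (by positivity)
  -- non-proportionality gives the key nondegeneracy
  have hkne : A₁ * B₂ - A₂ * B₁ ≠ 0 := by
    intro h
    apply hprop
    refine ⟨a / b, div_pos ha hb, ?_⟩
    have hbs : b * s₁ = a * s₂ := by
      rw [sub_eq_zero, hA₁def, hA₂def, hB₁def, hB₂def] at h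
      field_simp at h
      nlinarith [h, hD, ha, hb, hs₁pos, hs₂pos]
    have hVp1 : V₁ *ᵥ pv = (D⁻¹ * s₁) • pv := by
      have h2 := congrArg (fun v => D⁻¹ • v) hp₁
      simpa [smul_smul, inv_mul_cancel₀ hDne, inv_mul_cancel_left₀ hDne] using h2
    have hVp2 : V₂ *ᵥ pv = (D⁻¹ * s₂) • pv := by
      have h2 := congrArg (fun v => D⁻¹ • v) hp₂
      simpa [smul_smul, inv_mul_cancel₀ hDne, inv_mul_cancel_left₀ hDne] using h2
    have hM : V₁ - (a / b) • V₂ = 0 := by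
      apply matrix_eq_zero_of _ d0 d1 (by rw [← hDdef]; exact hDne)
      · rw [← hdvdef, Matrix.sub_mulVec, Matrix.smul_mulVec, had, hbd,
          smul_smul, div_mul_cancel₀ a hb.ne', sub_self]
      · rw [← hpvdef, Matrix.sub_mulVec, Matrix.smul_mulVec, hVp1, hVp2,
          smul_smul]
        have hs : s₁ = a / b * s₂ := by
          rw [eq_comm, div_mul_eq_mul_div, div_eq_iff hb.ne']
          linear_combination -hbs
        have : D⁻¹ * s₁ = a / b * (D⁻¹ * s₂) := by rw [hs]; ring
        rw [this, sub_self]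
    exact sub_eq_zero.mp hM
  -- constants
  obtain ⟨K₁, hK₁def⟩ : ∃ x : ℝ, x = Real.log ((2 * Real.pi * Real.sqrt V₁.det)⁻¹) := ⟨_, rfl⟩
  obtain ⟨K₂, hK₂def⟩ : ∃ x : ℝ, x = Real.log ((2 * Real.pi * Real.sqrt V₂.det)⁻¹) := ⟨_, rfl⟩
  have hDD : D⁻¹ * D = 1 := inv_mul_cancel₀ hDne
  -- Step 1: rotate + translate the source
  have step1 : AEquiv (fun z => (Real.log (gauss μ₁ V₁ z), Real.log (gauss μ₂ V₂ z)))
      (fun z : ℝ × ℝ => (K₁ + (-(1 / 2) * ((z.1 - 1) ^ 2 * A₁ + z.2 ^ 2 * B₁)),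
        K₂ + (-(1 / 2) * (z.1 ^ 2 * A₂ + z.2 ^ 2 * B₂)))) := by
    apply aequiv_step _ _
      (fun z : ℝ × ℝ => (μ₂ 0 + z.1 * d0 - z.2 * d1, μ₂ 1 + z.1 * d1 + z.2 * d0)) id ?_
      isDiffeo_id
    · intro z
      obtain ⟨s, t⟩ := z
      simp only [id_eq, Prod.mk.injEq]
      constructor
      · rw [log_gauss μ₁ V₁ h₁]
        have hv : (![(μ₂ 0 + s * d0 - t * d1, μ₂ 1 + s * d1 + t * d0).1 - μ₁ 0,
            (μ₂ 0 + s * d0 - t * d1, μ₂ 1 + s * d1 + t * d0).2 - μ₁ 1] : Fin 2 → ℝ) =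
            ![(s - 1) * d0 - t * d1, (s - 1) * d1 + t * d0] := by
          funext i
          fin_cases i
          · show μ₂ 0 + s * d0 - t * d1 - μ₁ 0 = (s - 1) * d0 - t * d1
            rw [hd0]; ring
          · show μ₂ 1 + s * d1 + t * d0 - μ₁ 1 = (s - 1) * d1 + t * d0
            rw [hd1]; ring
        rw [hv, key₁ s t, hK₁def, hA₁def, hB₁def]
      · rw [log_gauss μ₂ V₂ h₂]
        have hv : (![(μ₂ 0 + s * d0 - t * d1, μ₂ 1 + s * d1 + t * d0).1 - μ₂ 0,
            (μ₂ 0 + s * d0 - t * d1, μ₂ 1 + s * d1 + t * d0).2 - μ₂ 1] : Fin 2 → ℝ) =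
            ![s * d0 - t * d1, s * d1 + t * d0] := by
          funext i
          fin_cases i
          · show μ₂ 0 + s * d0 - t * d1 - μ₂ 0 = s * d0 - t * d1
            ring
          · show μ₂ 1 + s * d1 + t * d0 - μ₂ 1 = s * d1 + t * d0
            ring
        rw [hv, key₂ s t, hK₂def, hA₂def, hB₂def]
    · apply isDiffeo_mk_s9 _
        (fun z : ℝ × ℝ => (((z.1 - μ₂ 0) * d0 + (z.2 - μ₂ 1) * d1) * D⁻¹,
          ((μ₂ 0 - z.1) * d1 + (z.2 - μ₂ 1) * d0) * D⁻¹))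
      · intro z
        obtain ⟨s, t⟩ := z
        simp only [Prod.mk.injEq]
        constructor
        · linear_combination s * hDD - s * D⁻¹ * hDdef
        · linear_combination t * hDD - t * D⁻¹ * hDdef
      · intro z
        obtain ⟨x, y⟩ := z
        simp only [Prod.mk.injEq]
        constructor
        · linear_combination (x - μ₂ 0) * hDD - (x - μ₂ 0) * D⁻¹ * hDdef
        · linear_combination (y - μ₂ 1) * hDD - (y - μ₂ 1) * D⁻¹ * hDdef
      · fun_prop
      · fun_prop
  -- Step 2: linear change of the target
  obtain ⟨e, hedef⟩ : ∃ x : ℝ, x = A₁ * A₂ := ⟨_, rfl⟩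
  have hene : e ≠ 0 := by rw [hedef]; exact (mul_pos hA₁pos hA₂pos).ne'
  obtain ⟨k, hkdef⟩ : ∃ x : ℝ, x = (A₁ * B₂ - A₂ * B₁) / 2 := ⟨_, rfl⟩
  have hkne2 : k ≠ 0 := by rw [hkdef]; exact div_ne_zero hkne two_ne_zero
  have hee : e⁻¹ * e = 1 := inv_mul_cancel₀ hene
  have hAA : A₂⁻¹ * A₂ = 1 := inv_mul_cancel₀ hA₂pos.ne'
  have step2 : AEquiv
      (fun z : ℝ × ℝ => (K₁ + (-(1 / 2) * ((z.1 - 1) ^ 2 * A₁ + z.2 ^ 2 * B₁)),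
        K₂ + (-(1 / 2) * (z.1 ^ 2 * A₂ + z.2 ^ 2 * B₂))))
      (fun z : ℝ × ℝ => (e * z.1 - e / 2 + k * z.2 ^ 2,
        -(1 / 2) * (z.1 ^ 2 * A₂ + z.2 ^ 2 * B₂))) := by
    apply aequiv_step _ _ id
      (fun w : ℝ × ℝ => (A₂ * (w.1 - K₁) - A₁ * (w.2 - K₂), w.2 - K₂)) isDiffeo_id ?_ ?_
    · apply isDiffeo_mk_s9 _
        (fun w : ℝ × ℝ => ((w.1 + A₁ * w.2) * A₂⁻¹ + K₁, w.2 + K₂)) ?_ ?_ (by fun_prop) (by fun_prop)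
      · intro z
        obtain ⟨u, v⟩ := z
        simp only [Prod.mk.injEq]
        constructor
        · linear_combination (u - K₁) * hAA
        · ring
      · intro z
        obtain ⟨u, v⟩ := z
        simp only [Prod.mk.injEq]
        constructor
        · linear_combination (u + A₁ * v) * hAA
        · ring
    · intro z
      obtain ⟨s, t⟩ := z
      simp only [id_eq, Prod.mk.injEq]
      constructor
      · rw [hedef, hkdef]; ring
      · ring
  -- Step 3: shear the source
  have step3 : AEquiv
      (fun z : ℝ × ℝ => (e * z.1 - e / 2 + k * z.2 ^ 2,
        -(1 / 2) * (z.1 ^ 2 * A₂ + z.2 ^ 2 * B₂)))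
      (fun z : ℝ × ℝ => (z.1,
        -(1 / 2) * (((z.1 - k * z.2 ^ 2 + e / 2) * e⁻¹) ^ 2 * A₂ + z.2 ^ 2 * B₂))) := by
    apply aequiv_step _ _
      (fun z : ℝ × ℝ => ((z.1 - k * z.2 ^ 2 + e / 2) * e⁻¹, z.2)) id ?_ isDiffeo_id ?_
    · apply isDiffeo_mk_s9 _
        (fun z : ℝ × ℝ => (e * z.1 + k * z.2 ^ 2 - e / 2, z.2)) ?_ ?_ (by fun_prop) (by fun_prop)
      · intro z
        obtain ⟨x, y⟩ := z
        simp only [Prod.mk.injEq]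
        constructor
        · linear_combination (x - k * y ^ 2 + e / 2) * hee
        · trivial
      · intro z
        obtain ⟨x, y⟩ := z
        simp only [Prod.mk.injEq]
        constructor
        · linear_combination x * hee
        · trivial
    · intro z
      obtain ⟨X, t⟩ := z
      simp only [id_eq, Prod.mk.injEq]
      constructor
      · linear_combination (X - k * t ^ 2 + e / 2) * hee
      · trivial
  -- Step 4: remove the function of the first coordinate from the target
  obtain ⟨A', hA'def⟩ : ∃ x : ℝ, x = -(A₂ * k * (e⁻¹) ^ 2) := ⟨_, rfl⟩
  obtain ⟨Bc, hBcdef⟩ : ∃ x : ℝ, x = A₂ * k ^ 2 * (e⁻¹) ^ 2 / 2 := ⟨_, rfl⟩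
  have hA'ne : A' ≠ 0 := by
    rw [hA'def]
    exact neg_ne_zero.mpr (mul_ne_zero (mul_ne_zero hA₂pos.ne' hkne2)
      (pow_ne_zero 2 (inv_ne_zero hene)))
  have hk2 : 0 < k ^ 2 := lt_of_le_of_ne (sq_nonneg k) (Ne.symm (pow_ne_zero 2 hkne2))
  have he2 : 0 < (e⁻¹) ^ 2 :=
    lt_of_le_of_ne (sq_nonneg _) (Ne.symm (pow_ne_zero 2 (inv_ne_zero hene)))
  have hBcpos : 0 < Bc := by
    rw [hBcdef]
    have := mul_pos (mul_pos hA₂pos hk2) he2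
    linarith
  have step4 : AEquiv
      (fun z : ℝ × ℝ => (z.1,
        -(1 / 2) * (((z.1 - k * z.2 ^ 2 + e / 2) * e⁻¹) ^ 2 * A₂ + z.2 ^ 2 * B₂)))
      (fun z : ℝ × ℝ => (z.1,
        A' * (z.1 + e / 2) * z.2 ^ 2 + B₂ / 2 * z.2 ^ 2 + Bc * z.2 ^ 4)) := by
    apply aequiv_step _ _ id
      (fun w : ℝ × ℝ => (w.1, -(w.2 + 1 / 2 * A₂ * ((w.1 + e / 2) * e⁻¹) ^ 2)))
      isDiffeo_id ?_ ?_
    · apply isDiffeo_mk_s9 _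
        (fun w : ℝ × ℝ => (w.1, -w.2 - 1 / 2 * A₂ * ((w.1 + e / 2) * e⁻¹) ^ 2)) ?_ ?_
        (by fun_prop) (by fun_prop)
      · intro z
        obtain ⟨u, v⟩ := z
        simp only [Prod.mk.injEq]
        exact ⟨trivial, by ring⟩
      · intro z
        obtain ⟨u, v⟩ := z
        simp only [Prod.mk.injEq]
        exact ⟨trivial, by ring⟩
    · intro z
      obtain ⟨X, t⟩ := z
      simp only [id_eq, Prod.mk.injEq]
      constructor
      · trivial
      · rw [hA'def, hBcdef]; ring
  -- Step 5: affine rescaling to the normal form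
  obtain ⟨r, hrdef⟩ : ∃ x : ℝ, x = Bc * A'⁻¹ := ⟨_, rfl⟩
  obtain ⟨m, hmdef⟩ : ∃ x : ℝ, x = -(e / 2) - B₂ / 2 * A'⁻¹ := ⟨_, rfl⟩
  have hrne : r ≠ 0 := by rw [hrdef]; exact mul_ne_zero hBcpos.ne' (inv_ne_zero hA'ne)
  have hrr : r⁻¹ * r = 1 := inv_mul_cancel₀ hrne
  have hBB : Bc⁻¹ * Bc = 1 := inv_mul_cancel₀ hBcpos.ne'
  have hAA' : A'⁻¹ * A' = 1 := inv_mul_cancel₀ hA'ne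
  have step5 : AEquiv
      (fun z : ℝ × ℝ => (z.1,
        A' * (z.1 + e / 2) * z.2 ^ 2 + B₂ / 2 * z.2 ^ 2 + Bc * z.2 ^ 4))
      (fun z : ℝ × ℝ => (z.1, z.1 * z.2 ^ 2 + z.2 ^ 4)) := by
    apply aequiv_step _ _
      (fun z : ℝ × ℝ => (r * z.1 + m, z.2))
      (fun w : ℝ × ℝ => ((w.1 - m) * r⁻¹, w.2 * Bc⁻¹)) ?_ ?_ ?_
    · apply isDiffeo_mk_s9 _
        (fun z : ℝ × ℝ => ((z.1 - m) * r⁻¹, z.2)) ?_ ?_ (by fun_prop) (by fun_prop)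
      · intro z
        obtain ⟨u, w⟩ := z
        simp only [Prod.mk.injEq]
        exact ⟨by linear_combination u * hrr, trivial⟩
      · intro z
        obtain ⟨u, w⟩ := z
        simp only [Prod.mk.injEq]
        exact ⟨by linear_combination (u - m) * hrr, trivial⟩
    · apply isDiffeo_mk_s9 _
        (fun w : ℝ × ℝ => (r * w.1 + m, w.2 * Bc)) ?_ ?_ (by fun_prop) (by fun_prop)
      · intro z
        obtain ⟨u, w⟩ := z
        simp only [Prod.mk.injEq]
        exact ⟨by linear_combination (u - m) * hrr, by linear_combination w * hBB⟩
      · intro z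
        obtain ⟨u, w⟩ := z
        simp only [Prod.mk.injEq]
        exact ⟨by linear_combination u * hrr, by linear_combination w * hBB⟩
    · intro z
      obtain ⟨u, w⟩ := z
      simp only [Prod.mk.injEq]
      constructor
      · linear_combination u * hrr
      · rw [hrdef, hmdef]
        linear_combination (u * w ^ 2 * (Bc⁻¹ * Bc) - B₂ / 2 * w ^ 2 * Bc⁻¹) * hAA' +
          (u * w ^ 2 + w ^ 4) * hBB
  exact step1.trans (step2.trans (step3.trans (step4.trans step5)))
end

section
/- Let f₁ = φ(·; μ₁, Σ₁) and f₂ = φ(·; μ₂, Σ₂) be bivariate normal densities with μ₁ ≠ μ₂, with Σ₁ and Σ₂ not proportional, and with f₁ and f₂ codirectional, and set F = (f₁, f₂) : ℝ² → ℝ². Then the singular set S(F) is the union of two distinct intersecting lines: there exist two distinct affine lines ℓ₁, ℓ₂ in ℝ² with ℓ₁ ∩ ℓ₂ ≠ ∅ such that S(F) = ℓ₁ ∪ ℓ₂. -/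
set_option maxHeartbeats 1000000


open Matrix

-- AUX START
noncomputable section

namespace Stmt11Aux

def lin (p q : ℝ) : ℝ × ℝ →L[ℝ] ℝ :=
  p • (ContinuousLinearMap.fst ℝ ℝ ℝ) + q • (ContinuousLinearMap.snd ℝ ℝ ℝ)

lemma lin_apply (p q : ℝ) (v : ℝ × ℝ) : lin p q v = p * v.1 + q * v.2 := by simp [lin]

lemma hasFDerivAt_quad (t00 t01 t11 m0 m1 : ℝ) (z : ℝ × ℝ) :
    HasFDerivAt (fun z : ℝ × ℝ =>
        t00*((z.1-m0)*(z.1-m0)) + t01*((z.1-m0)*(z.2-m1)) + t11*((z.2-m1)*(z.2-m1)))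
      (lin (2*t00*(z.1-m0) + t01*(z.2-m1)) (t01*(z.1-m0) + 2*t11*(z.2-m1))) z := by
  have hx : HasFDerivAt (fun z : ℝ × ℝ => z.1 - m0) (ContinuousLinearMap.fst ℝ ℝ ℝ) z :=
    (hasFDerivAt_fst.sub_const m0)
  have hy : HasFDerivAt (fun z : ℝ × ℝ => z.2 - m1) (ContinuousLinearMap.snd ℝ ℝ ℝ) z :=
    (hasFDerivAt_snd.sub_const m1)
  have h := (((hx.mul hx).const_mul t00).add (((hx.mul hy)).const_mul t01)).add
    ((hy.mul hy).const_mul t11)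
  refine h.congr_fderiv ?_
  refine ContinuousLinearMap.ext fun v => ?_
  simp [lin]; ring

lemma gauss_eq (μ : Fin 2 → ℝ) (S : Matrix (Fin 2) (Fin 2) ℝ) :
    gauss μ S = fun z => (2 * Real.pi * Real.sqrt S.det)⁻¹ *
      Real.exp (-(1/2) * (S⁻¹ 0 0 * ((z.1 - μ 0)*(z.1 - μ 0))
        + (S⁻¹ 0 1 + S⁻¹ 1 0) * ((z.1 - μ 0)*(z.2 - μ 1))
        + S⁻¹ 1 1 * ((z.2 - μ 1)*(z.2 - μ 1)))) := by
  funext z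
  unfold gauss
  congr 1
  congr 1
  simp [dotProduct, mulVec, Fin.sum_univ_two]
  ring

lemma hasFDerivAt_gauss (μ : Fin 2 → ℝ) (S : Matrix (Fin 2) (Fin 2) ℝ) (z : ℝ × ℝ) :
    HasFDerivAt (gauss μ S)
      (lin (gauss μ S z * (-(1/2) * (2 * S⁻¹ 0 0 * (z.1 - μ 0) + (S⁻¹ 0 1 + S⁻¹ 1 0) * (z.2 - μ 1))))
           (gauss μ S z * (-(1/2) * ((S⁻¹ 0 1 + S⁻¹ 1 0) * (z.1 - μ 0) + 2 * S⁻¹ 1 1 * (z.2 - μ 1))))) z := by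
  rw [gauss_eq]
  set C := (2 * Real.pi * Real.sqrt S.det)⁻¹ with hC
  have hq := hasFDerivAt_quad (S⁻¹ 0 0) (S⁻¹ 0 1 + S⁻¹ 1 0) (S⁻¹ 1 1) (μ 0) (μ 1) z
  have hq2 := hq.const_mul (-(1/2) : ℝ)
  have he := (Real.hasDerivAt_exp _).comp_hasFDerivAt z hq2
  have := he.const_mul C
  refine this.congr_fderiv ?_
  refine ContinuousLinearMap.ext fun v => ?_
  simp [lin]
  ring

lemma det_prod_lin (p q r s : ℝ) :
    LinearMap.det ((lin p q).prod (lin r s)).toLinearMap = p * s - q * r := by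
  rw [← LinearMap.det_toMatrix (Module.Basis.finTwoProd ℝ), Matrix.det_fin_two]
  simp [LinearMap.toMatrix_apply, Module.Basis.finTwoProd, lin]

lemma gauss_pos (μ : Fin 2 → ℝ) (S : Matrix (Fin 2) (Fin 2) ℝ) (hdet : 0 < S.det)
    (z : ℝ × ℝ) : 0 < gauss μ S z := by
  unfold gauss
  exact mul_pos (inv_pos.mpr (mul_pos (mul_pos two_pos Real.pi_pos)
    (Real.sqrt_pos.mpr hdet))) (Real.exp_pos _)

lemma npos {w0 w1 : ℝ} (hw : ¬(w0 = 0 ∧ w1 = 0)) : 0 < w0^2 + w1^2 := by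
  rcases not_and_or.mp hw with h | h
  · positivity
  · positivity

lemma vec_ne {w0 w1 : ℝ} (hw : ¬(w0 = 0 ∧ w1 = 0)) : (![w0, w1] : Fin 2 → ℝ) ≠ 0 := by
  intro h
  exact hw ⟨by simpa using congrFun h 0, by simpa using congrFun h 1⟩

lemma eigen_entries (M : Matrix (Fin 2) (Fin 2) ℝ) (hM : M.PosDef) (w0 w1 a : ℝ)
    (hw : ¬(w0 = 0 ∧ w1 = 0))
    (h0 : M 0 0 * w0 + M 0 1 * w1 = a * w0)
    (h1 : M 1 0 * w0 + M 1 1 * w1 = a * w1) :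
    0 < a ∧ ∃ B : ℝ, 0 < B ∧
      M 0 0 = (a*w0^2 + B*w1^2)/(w0^2+w1^2) ∧
      M 0 1 = (a - B)*w0*w1/(w0^2+w1^2) ∧
      M 1 0 = (a - B)*w0*w1/(w0^2+w1^2) ∧
      M 1 1 = (a*w1^2 + B*w0^2)/(w0^2+w1^2) := by
  have hn : 0 < w0^2 + w1^2 := npos hw
  have hn' : w0^2 + w1^2 ≠ 0 := hn.ne'
  have hsym : M 1 0 = M 0 1 := by
    have := congrFun (congrFun hM.1 0) 1
    simpa [conjTranspose_apply] using this
  have ha : 0 < a := by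
    have hq := hM.dotProduct_mulVec_pos (x := ![w0, w1]) (vec_ne hw)
    simp only [dotProduct, mulVec, Fin.sum_univ_two, Pi.star_apply, star_trivial] at hq
    simp only [Matrix.cons_val_zero, Matrix.cons_val_one, Matrix.head_cons] at hq
    rw [h0, h1] at hq
    nlinarith [hq, hn]
  have huw : (![-w1, w0] : Fin 2 → ℝ) ≠ 0 := by
    intro h
    exact hw ⟨by simpa using congrFun h 1, by simpa [neg_eq_zero] using congrFun h 0⟩
  set P := -(M 0 0)*w1 + M 0 1*w0 with hP
  set Q := -(M 1 0)*w1 + M 1 1*w0 with hQ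
  have hPQ : P*w0 + Q*w1 = 0 := by
    rw [hP, hQ]
    linear_combination w0*h1 - w1*h0 - (w0^2+w1^2)*hsym
  set B := (-P*w1 + Q*w0)/(w0^2+w1^2) with hBdef
  have hBn : B * (w0^2+w1^2) = -P*w1 + Q*w0 := by
    rw [hBdef]; field_simp
  have hB : 0 < B := by
    have hq := hM.dotProduct_mulVec_pos (x := ![-w1, w0]) huw
    simp only [dotProduct, mulVec, Fin.sum_univ_two, Pi.star_apply, star_trivial] at hq
    simp only [Matrix.cons_val_zero, Matrix.cons_val_one, Matrix.head_cons] at hq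
    have hq2 : 0 < B * (w0^2+w1^2) := by rw [hBn, hP, hQ]; nlinarith [hq]
    nlinarith [hq2, hn]
  have f1 : P = -B*w1 := by
    rw [hBdef]; field_simp; linear_combination w0 * hPQ
  have f2 : Q = B*w0 := by
    rw [hBdef]; field_simp; linear_combination w1 * hPQ
  have g1 : -(M 0 0)*w1 + M 0 1*w0 = -B*w1 := by rw [← hP]; exact f1
  have g2 : -(M 1 0)*w1 + M 1 1*w0 = B*w0 := by rw [← hQ]; exact f2
  refine ⟨ha, B, hB, ?_, ?_, ?_, ?_⟩
  · field_simp; linear_combination w0*h0 - w1*g1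
  · field_simp; linear_combination w1*h0 + w0*g1
  · field_simp; linear_combination w0*h1 - w1*g2
  · field_simp; linear_combination w1*h1 + w0*g2

lemma inv_entries (M : Matrix (Fin 2) (Fin 2) ℝ) (w0 w1 a B : ℝ)
    (hn : w0^2 + w1^2 ≠ 0) (ha : a ≠ 0) (hB : B ≠ 0)
    (e00 : M 0 0 = (a*w0^2 + B*w1^2)/(w0^2+w1^2))
    (e01 : M 0 1 = (a - B)*w0*w1/(w0^2+w1^2))
    (e10 : M 1 0 = (a - B)*w0*w1/(w0^2+w1^2))
    (e11 : M 1 1 = (a*w1^2 + B*w0^2)/(w0^2+w1^2)) :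
    M⁻¹ 0 0 = (a⁻¹*w0^2 + B⁻¹*w1^2)/(w0^2+w1^2) ∧
    M⁻¹ 0 1 = (a⁻¹ - B⁻¹)*w0*w1/(w0^2+w1^2) ∧
    M⁻¹ 1 0 = (a⁻¹ - B⁻¹)*w0*w1/(w0^2+w1^2) ∧
    M⁻¹ 1 1 = (a⁻¹*w1^2 + B⁻¹*w0^2)/(w0^2+w1^2) := by
  have hinv : M⁻¹ = Matrix.of ![![(a⁻¹*w0^2 + B⁻¹*w1^2)/(w0^2+w1^2), (a⁻¹ - B⁻¹)*w0*w1/(w0^2+w1^2)],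
      ![(a⁻¹ - B⁻¹)*w0*w1/(w0^2+w1^2), (a⁻¹*w1^2 + B⁻¹*w0^2)/(w0^2+w1^2)]] := by
    apply Matrix.inv_eq_right_inv
    ext i j
    fin_cases i <;> fin_cases j <;>
      simp [Matrix.mul_apply, Fin.sum_univ_two, e00, e01, e10, e11, Matrix.one_apply] <;>
      field_simp <;> ring
  rw [hinv]
  refine ⟨by simp, by simp, by simp, by simp⟩

lemma cross_iff (g1 g2 e1x e1y e2x e2y R : ℝ) (hg1 : g1 ≠ 0) (hg2 : g2 ≠ 0)
    (hE : e1x*e2y - e1y*e2x = R) :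
    ((g1*e1x)*(g2*e2y) - (g1*e1y)*(g2*e2x) = 0 ↔ R = 0) := by
  rw [← hE]
  constructor
  · intro h
    have h2 : g1*g2*(e1x*e2y - e1y*e2x) = 0 := by linear_combination h
    exact (mul_eq_zero.mp h2).resolve_left (mul_ne_zero hg1 hg2)
  · intro h
    linear_combination g1*g2*h

end Stmt11Aux

end
-- AUX END

theorem stmt_11 (μ₁ μ₂ : Fin 2 → ℝ) (V₁ V₂ : Matrix (Fin 2) (Fin 2) ℝ)
    (h₁ : V₁.PosDef) (h₂ : V₂.PosDef) (hμ : μ₁ ≠ μ₂)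
    (hprop : ¬ Proportional V₁ V₂) (hcod : Codirectional μ₁ μ₂ V₁ V₂) :
    ∃ ℓ₁ ℓ₂ : Set (ℝ × ℝ), IsAffineLine ℓ₁ ∧ IsAffineLine ℓ₂ ∧ ℓ₁ ≠ ℓ₂ ∧
      (ℓ₁ ∩ ℓ₂).Nonempty ∧
      singularSet (fun z => (gauss μ₁ V₁ z, gauss μ₂ V₂ z)) = ℓ₁ ∪ ℓ₂ := by
  classical
  open Stmt11Aux in
  obtain ⟨a, b, hva, hvb⟩ := hcod
  obtain ⟨w0, hw0⟩ : ∃ w0 : ℝ, w0 = μ₁ 0 - μ₂ 0 := ⟨_, rfl⟩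
  obtain ⟨w1, hw1⟩ : ∃ w1 : ℝ, w1 = μ₁ 1 - μ₂ 1 := ⟨_, rfl⟩
  have hw : ¬(w0 = 0 ∧ w1 = 0) := by
    rintro ⟨hz0, hz1⟩
    apply hμ
    funext i
    fin_cases i
    · rw [hw0] at hz0
      simpa [sub_eq_zero] using hz0
    · rw [hw1] at hz1
      simpa [sub_eq_zero] using hz1
  have hn : 0 < w0^2 + w1^2 := Stmt11Aux.npos hw
  have hn' : w0^2 + w1^2 ≠ 0 := hn.ne'
  have hva0 : V₁ 0 0 * w0 + V₁ 0 1 * w1 = a * w0 := by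
    have h := congrFun hva 0
    simp only [mulVec, dotProduct, Fin.sum_univ_two, Pi.sub_apply, Pi.smul_apply,
      smul_eq_mul] at h
    rw [hw0, hw1]; linarith [h]
  have hva1 : V₁ 1 0 * w0 + V₁ 1 1 * w1 = a * w1 := by
    have h := congrFun hva 1
    simp only [mulVec, dotProduct, Fin.sum_univ_two, Pi.sub_apply, Pi.smul_apply,
      smul_eq_mul] at h
    rw [hw0, hw1]; linarith [h]
  have hvb0 : V₂ 0 0 * w0 + V₂ 0 1 * w1 = b * w0 := by
    have h := congrFun hvb 0
    simp only [mulVec, dotProduct, Fin.sum_univ_two, Pi.sub_apply, Pi.smul_apply,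
      smul_eq_mul] at h
    rw [hw0, hw1]; linarith [h]
  have hvb1 : V₂ 1 0 * w0 + V₂ 1 1 * w1 = b * w1 := by
    have h := congrFun hvb 1
    simp only [mulVec, dotProduct, Fin.sum_univ_two, Pi.sub_apply, Pi.smul_apply,
      smul_eq_mul] at h
    rw [hw0, hw1]; linarith [h]
  obtain ⟨hapos, a', ha'pos, v100, v101, v110, v111⟩ :=
    Stmt11Aux.eigen_entries V₁ h₁ w0 w1 a hw hva0 hva1
  obtain ⟨hbpos, b', hb'pos, v200, v201, v210, v211⟩ :=
    Stmt11Aux.eigen_entries V₂ h₂ w0 w1 b hw hvb0 hvb1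
  obtain ⟨t100, t101, t110, t111⟩ :=
    Stmt11Aux.inv_entries V₁ w0 w1 a a' hn' hapos.ne' ha'pos.ne' v100 v101 v110 v111
  obtain ⟨t200, t201, t210, t211⟩ :=
    Stmt11Aux.inv_entries V₂ w0 w1 b b' hn' hbpos.ne' hb'pos.ne' v200 v201 v210 v211
  obtain ⟨K, hKdef⟩ : ∃ K : ℝ, K = a⁻¹*b'⁻¹ - b⁻¹*a'⁻¹ := ⟨_, rfl⟩
  have hK : K ≠ 0 := by
    intro hK0
    apply hprop
    refine ⟨a/b, by positivity, ?_⟩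
    have hcond : a' * b = a * b' := by
      rw [hKdef] at hK0
      field_simp at hK0
      linarith [hK0]
    have hb0 : b ≠ 0 := hbpos.ne'
    have q00 : V₁ 0 0 = ((a/b) • V₂) 0 0 := by
      rw [Matrix.smul_apply, smul_eq_mul, v100, v200]
      field_simp
      linear_combination (w1^2) * hcond
    have q01 : V₁ 0 1 = ((a/b) • V₂) 0 1 := by
      rw [Matrix.smul_apply, smul_eq_mul, v101, v201]
      field_simp
      linear_combination (-(w0*w1)) * hcond
    have q10 : V₁ 1 0 = ((a/b) • V₂) 1 0 := by
      rw [Matrix.smul_apply, smul_eq_mul, v110, v210]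
      field_simp
      linear_combination (-(w0*w1)) * hcond
    have q11 : V₁ 1 1 = ((a/b) • V₂) 1 1 := by
      rw [Matrix.smul_apply, smul_eq_mul, v111, v211]
      field_simp
      linear_combination (w0^2) * hcond
    ext i j
    fin_cases i <;> fin_cases j
    exacts [q00, q01, q10, q11]
  obtain ⟨α₀, hα₀⟩ : ∃ α₀ : ℝ, α₀ = (b⁻¹*a'⁻¹)/K := ⟨_, rfl⟩
  refine ⟨{q : ℝ × ℝ | ∃ t : ℝ, q = ((μ₁ 0, μ₁ 1) : ℝ × ℝ) + t • ((w0, w1) : ℝ × ℝ)},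
    {q : ℝ × ℝ | ∃ t : ℝ, q = ((μ₁ 0 + α₀*w0, μ₁ 1 + α₀*w1) : ℝ × ℝ) + t • ((-w1, w0) : ℝ × ℝ)},
    ?_, ?_, ?_, ?_, ?_⟩
  · refine ⟨(μ₁ 0, μ₁ 1), (w0, w1), ?_, rfl⟩
    intro h
    rw [Prod.mk_eq_zero] at h
    exact hw h
  · refine ⟨(μ₁ 0 + α₀*w0, μ₁ 1 + α₀*w1), (-w1, w0), ?_, rfl⟩
    intro h
    rw [Prod.mk_eq_zero] at h
    exact hw ⟨h.2, neg_eq_zero.mp h.1⟩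
  · -- lines distinct
    intro heq
    have p1 : ((μ₁ 0, μ₁ 1) : ℝ × ℝ) ∈
        {q : ℝ × ℝ | ∃ t : ℝ, q = ((μ₁ 0, μ₁ 1) : ℝ × ℝ) + t • ((w0, w1) : ℝ × ℝ)} :=
      ⟨0, by simp⟩
    have p2 : ((μ₁ 0 + w0, μ₁ 1 + w1) : ℝ × ℝ) ∈
        {q : ℝ × ℝ | ∃ t : ℝ, q = ((μ₁ 0, μ₁ 1) : ℝ × ℝ) + t • ((w0, w1) : ℝ × ℝ)} :=
      ⟨1, by simp [Prod.ext_iff]⟩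
    rw [heq] at p1 p2
    obtain ⟨t1, ht1⟩ := p1
    obtain ⟨t2, ht2⟩ := p2
    rw [Prod.ext_iff] at ht1 ht2
    simp only [Prod.fst_add, Prod.snd_add, Prod.smul_fst, Prod.smul_snd, smul_eq_mul] at ht1 ht2
    have e1 := ht1.1
    have e2 := ht1.2
    have e3 := ht2.1
    have e4 := ht2.2
    have hw0' : w0 = (t1 - t2)*w1 := by linear_combination e3 - e1
    have hw1' : w1 = (t2 - t1)*w0 := by linear_combination e4 - e2
    have : w0^2 + w1^2 = 0 := by linear_combination w0*hw0' + w1*hw1'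
    linarith [hn]
  · -- intersection nonempty
    refine ⟨((μ₁ 0 + α₀*w0, μ₁ 1 + α₀*w1) : ℝ × ℝ), ⟨α₀, by simp [Prod.ext_iff]⟩,
      ⟨0, by simp⟩⟩
  · -- the singular set computation
    ext z
    have hg1 := Stmt11Aux.hasFDerivAt_gauss μ₁ V₁ z
    have hg2 := Stmt11Aux.hasFDerivAt_gauss μ₂ V₂ z
    have hF := (hg1.prodMk hg2).fderiv
    show LinearMap.det (fderiv ℝ (fun z => (gauss μ₁ V₁ z, gauss μ₂ V₂ z)) z).toLinearMap = 0 ↔ _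
    rw [hF, Stmt11Aux.det_prod_lin]
    obtain ⟨xx, hxx⟩ : ∃ xx : ℝ, xx = z.1 - μ₁ 0 := ⟨_, rfl⟩
    obtain ⟨yy, hyy⟩ : ∃ yy : ℝ, yy = z.2 - μ₁ 1 := ⟨_, rfl⟩
    have hx2 : z.1 - μ₂ 0 = xx + w0 := by rw [hxx, hw0]; ring
    have hy2 : z.2 - μ₂ 1 = yy + w1 := by rw [hyy, hw1]; ring
    have hx1 : z.1 - μ₁ 0 = xx := hxx.symm
    have hy1 : z.2 - μ₁ 1 = yy := hyy.symm
    obtain ⟨R, hR⟩ : ∃ R : ℝ,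
        R = ((-xx*w1 + yy*w0) * (K*(xx*w0 + yy*w1) - (b⁻¹*a'⁻¹)*(w0^2+w1^2)))/(w0^2+w1^2) :=
      ⟨_, rfl⟩
    have hE : (-(1/2) * (2 * V₁⁻¹ 0 0 * (z.1 - μ₁ 0) + (V₁⁻¹ 0 1 + V₁⁻¹ 1 0) * (z.2 - μ₁ 1))) *
        (-(1/2) * ((V₂⁻¹ 0 1 + V₂⁻¹ 1 0) * (z.1 - μ₂ 0) + 2 * V₂⁻¹ 1 1 * (z.2 - μ₂ 1))) -
        (-(1/2) * ((V₁⁻¹ 0 1 + V₁⁻¹ 1 0) * (z.1 - μ₁ 0) + 2 * V₁⁻¹ 1 1 * (z.2 - μ₁ 1))) *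
        (-(1/2) * (2 * V₂⁻¹ 0 0 * (z.1 - μ₂ 0) + (V₂⁻¹ 0 1 + V₂⁻¹ 1 0) * (z.2 - μ₂ 1))) = R := by
      rw [hx2, hy2, hx1, hy1, t100, t101, t110, t111, t200, t201, t210, t211, hR, hKdef]
      field_simp
      ring
    rw [Stmt11Aux.cross_iff (gauss μ₁ V₁ z) (gauss μ₂ V₂ z) _ _ _ _ R
      (Stmt11Aux.gauss_pos μ₁ V₁ h₁.det_pos z).ne' (Stmt11Aux.gauss_pos μ₂ V₂ h₂.det_pos z).ne' hE]
    rw [hR, div_eq_zero_iff]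
    simp only [hn', or_false]
    rw [mul_eq_zero]
    constructor
    · rintro (hβ | hc)
      · left
        refine ⟨(xx*w0 + yy*w1)/(w0^2+w1^2), ?_⟩
        rw [Prod.ext_iff]
        constructor
        · show z.1 = μ₁ 0 + (xx*w0 + yy*w1)/(w0^2+w1^2) * w0
          rw [show z.1 = μ₁ 0 + xx from by rw [hxx]; ring]
          field_simp
          linear_combination (-w1) * hβ
        · show z.2 = μ₁ 1 + (xx*w0 + yy*w1)/(w0^2+w1^2) * w1
          rw [show z.2 = μ₁ 1 + yy from by rw [hyy]; ring]
          field_simp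
          linear_combination w0 * hβ
      · right
        have hα : α₀ = (xx*w0 + yy*w1)/(w0^2+w1^2) := by
          rw [hα₀, div_eq_div_iff hK hn']
          linear_combination -hc
        refine ⟨(-xx*w1 + yy*w0)/(w0^2+w1^2), ?_⟩
        rw [Prod.ext_iff]
        constructor
        · show z.1 = μ₁ 0 + α₀*w0 + (-xx*w1 + yy*w0)/(w0^2+w1^2) * (-w1)
          rw [show z.1 = μ₁ 0 + xx from by rw [hxx]; ring, hα]
          field_simp
          ring
        · show z.2 = μ₁ 1 + α₀*w1 + (-xx*w1 + yy*w0)/(w0^2+w1^2) * w0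
          rw [show z.2 = μ₁ 1 + yy from by rw [hyy]; ring, hα]
          field_simp
          ring
    · rintro (⟨t, ht⟩ | ⟨t, ht⟩)
      · left
        rw [Prod.ext_iff] at ht
        simp only [Prod.fst_add, Prod.snd_add, Prod.smul_fst, Prod.smul_snd, smul_eq_mul] at ht
        have hx : xx = t * w0 := by rw [hxx]; linear_combination ht.1
        have hy : yy = t * w1 := by rw [hyy]; linear_combination ht.2
        rw [hx, hy]; ring
      · right
        rw [Prod.ext_iff] at ht
        simp only [Prod.fst_add, Prod.snd_add, Prod.smul_fst, Prod.smul_snd, smul_eq_mul] at ht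
        have hx : xx = α₀*w0 - t * w1 := by rw [hxx]; linear_combination ht.1
        have hy : yy = α₀*w1 + t * w0 := by rw [hyy]; linear_combination ht.2
        rw [hx, hy, hα₀]
        field_simp
        ring
end

section
/- Let f₁ = φ(·; μ₁, Σ₁) and f₂ = φ(·; μ₂, Σ₂) be bivariate normal densities with μ₁ ≠ μ₂ and with Σ₁ and Σ₂ proportional (Σ₁ = cΣ₂ for some c > 0), and set F = (f₁, f₂) : ℝ² → ℝ². Then the singular set S(F) is an affine line in ℝ². -/
open Matrix

noncomputable section AuxProof

open ContinuousLinearMap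

/-- Auxiliary quadratic form. -/
def quadMap' (a b d m n : ℝ) : ℝ × ℝ → ℝ := fun z =>
  -(1/2) * ((z.1 - m) * (a*(z.1-m) + b*(z.2-n)) + (z.2-n) * (b*(z.1-m) + d*(z.2-n)))

lemma hasFDerivAt_quadMap' (a b d m n : ℝ) (z : ℝ × ℝ) :
    HasFDerivAt (quadMap' a b d m n)
      ((-(a*(z.1-m) + b*(z.2-n))) • fst ℝ ℝ ℝ + (-(b*(z.1-m) + d*(z.2-n))) • snd ℝ ℝ ℝ) z := by
  have h1 : HasFDerivAt (fun z : ℝ × ℝ => z.1 - m) (fst ℝ ℝ ℝ) z := hasFDerivAt_fst.sub_const m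
  have h2 : HasFDerivAt (fun z : ℝ × ℝ => z.2 - n) (snd ℝ ℝ ℝ) z := hasFDerivAt_snd.sub_const n
  have H := ((h1.mul ((h1.const_mul a).add (h2.const_mul b))).add
      (h2.mul ((h1.const_mul b).add (h2.const_mul d)))).const_mul (-(1/2))
  refine H.congr_fderiv ?_
  refine ContinuousLinearMap.ext fun h => ?_
  simp
  ring

lemma gauss_eq' (μ : Fin 2 → ℝ) (S : Matrix (Fin 2) (Fin 2) ℝ)
    (hsym : S⁻¹ 1 0 = S⁻¹ 0 1) (z : ℝ × ℝ) :
    gauss μ S z = (2 * Real.pi * Real.sqrt S.det)⁻¹ *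
      Real.exp (quadMap' (S⁻¹ 0 0) (S⁻¹ 0 1) (S⁻¹ 1 1) (μ 0) (μ 1) z) := by
  unfold gauss quadMap'
  congr 2
  simp [dotProduct, Matrix.mulVec, Fin.sum_univ_two, hsym]

lemma hasFDerivAt_gauss' (μ : Fin 2 → ℝ) (S : Matrix (Fin 2) (Fin 2) ℝ)
    (hsym : S⁻¹ 1 0 = S⁻¹ 0 1) (z : ℝ × ℝ) :
    HasFDerivAt (gauss μ S)
      (gauss μ S z • ((-(S⁻¹ 0 0*(z.1-μ 0) + S⁻¹ 0 1*(z.2-μ 1))) • fst ℝ ℝ ℝ +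
        (-(S⁻¹ 0 1*(z.1-μ 0) + S⁻¹ 1 1*(z.2-μ 1))) • snd ℝ ℝ ℝ)) z := by
  have hq := hasFDerivAt_quadMap' (S⁻¹ 0 0) (S⁻¹ 0 1) (S⁻¹ 1 1) (μ 0) (μ 1) z
  have H := (hq.exp).const_mul (2 * Real.pi * Real.sqrt S.det)⁻¹
  have hfun : (fun z => (2 * Real.pi * Real.sqrt S.det)⁻¹ *
      Real.exp (quadMap' (S⁻¹ 0 0) (S⁻¹ 0 1) (S⁻¹ 1 1) (μ 0) (μ 1) z)) = gauss μ S := by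
    funext w; rw [gauss_eq' μ S hsym w]
  rw [hfun] at H
  refine H.congr_fderiv ?_
  rw [gauss_eq' μ S hsym z, smul_smul]

lemma det_aux' (g1 g2 p q r s : ℝ) :
    LinearMap.det (((g1 • (p • fst ℝ ℝ ℝ + q • snd ℝ ℝ ℝ)).prod
      (g2 • (r • fst ℝ ℝ ℝ + s • snd ℝ ℝ ℝ))).toLinearMap) = g1*g2*(p*s - q*r) := by
  rw [← LinearMap.det_toMatrix (Module.Basis.finTwoProd ℝ)]
  rw [Matrix.det_fin_two]
  simp [LinearMap.toMatrix_apply, Module.Basis.finTwoProd]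
  ring

lemma gauss_pos' (μ : Fin 2 → ℝ) (S : Matrix (Fin 2) (Fin 2) ℝ) (hdet : 0 < S.det)
    (z : ℝ × ℝ) : 0 < gauss μ S z := by
  unfold gauss
  have hπ := Real.pi_pos
  have hs := Real.sqrt_pos.mpr hdet
  have : 0 < (2 * Real.pi * Real.sqrt S.det)⁻¹ := by positivity
  exact mul_pos this (Real.exp_pos _)

end AuxProof

theorem stmt_12 (μ₁ μ₂ : Fin 2 → ℝ) (V₁ V₂ : Matrix (Fin 2) (Fin 2) ℝ)
    (h₁ : V₁.PosDef) (h₂ : V₂.PosDef) (hμ : μ₁ ≠ μ₂) (hprop : Proportional V₁ V₂) :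
    IsAffineLine (singularSet (fun z => (gauss μ₁ V₁ z, gauss μ₂ V₂ z))) := by
  classical
  obtain ⟨c, hc, hV⟩ := hprop
  have hdet₁ : (0:ℝ) < V₁.det := h₁.det_pos
  have hdet₂ : (0:ℝ) < V₂.det := h₂.det_pos
  have hc' : c ≠ 0 := ne_of_gt hc
  -- inverse relation
  have hinv : V₁⁻¹ = c⁻¹ • V₂⁻¹ := by
    rw [hV]
    apply Matrix.inv_eq_right_inv
    rw [Matrix.smul_mul, Matrix.mul_smul, smul_smul,
      Matrix.mul_nonsing_inv V₂ (ne_of_gt hdet₂).isUnit, mul_inv_cancel₀ hc', one_smul]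
  -- symmetry of inverses
  have hsym₂ : V₂⁻¹ 1 0 = V₂⁻¹ 0 1 := by simpa using (h₂.1.inv.apply 1 0).symm
  have hsym₁ : V₁⁻¹ 1 0 = V₁⁻¹ 0 1 := by simpa using (h₁.1.inv.apply 1 0).symm
  set a := V₂⁻¹ 0 0 with ha
  set b := V₂⁻¹ 0 1 with hb
  set d := V₂⁻¹ 1 1 with hd
  have hdetinv : a * d - b * b ≠ 0 := by
    have h1 : V₂⁻¹.det = (V₂.det)⁻¹ := by
      rw [Matrix.det_nonsing_inv, Ring.inverse_eq_inv]
    have h2 : V₂⁻¹.det = a * d - b * b := by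
      rw [Matrix.det_fin_two, hsym₂]
    rw [h2] at h1
    rw [h1]
    exact inv_ne_zero (ne_of_gt hdet₂)
  set m₁ := μ₁ 0; set n₁ := μ₁ 1; set m₂ := μ₂ 0; set n₂ := μ₂ 1
  -- entries of V₁⁻¹
  have e00 : V₁⁻¹ 0 0 = c⁻¹ * a := by rw [hinv]; rfl
  have e01 : V₁⁻¹ 0 1 = c⁻¹ * b := by rw [hinv]; rfl
  have e11 : V₁⁻¹ 1 1 = c⁻¹ * d := by rw [hinv]; rfl
  -- key characterization of the singular set
  have key : singularSet (fun z => (gauss μ₁ V₁ z, gauss μ₂ V₂ z)) =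
      {z : ℝ × ℝ | (n₁ - n₂) * (z.1 - m₁) - (m₁ - m₂) * (z.2 - n₁) = 0} := by
    ext z
    have hg1 := hasFDerivAt_gauss' μ₁ V₁ hsym₁ z
    have hg2 := hasFDerivAt_gauss' μ₂ V₂ hsym₂ z
    have hF := hg1.prodMk hg2
    simp only [singularSet, Set.mem_setOf_eq, hF.fderiv, det_aux']
    have hK : gauss μ₁ V₁ z * gauss μ₂ V₂ z * (c⁻¹ * (a * d - b * b)) ≠ 0 :=
      mul_ne_zero (mul_ne_zero (ne_of_gt (gauss_pos' μ₁ V₁ hdet₁ z))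
        (ne_of_gt (gauss_pos' μ₂ V₂ hdet₂ z))) (mul_ne_zero (inv_ne_zero hc') hdetinv)
    rw [e00, e01, e11]
    rw [show gauss μ₁ V₁ z * gauss μ₂ V₂ z *
        (-(c⁻¹ * a * (z.1 - m₁) + c⁻¹ * b * (z.2 - n₁)) * -(b * (z.1 - m₂) + d * (z.2 - n₂)) -
         -(c⁻¹ * b * (z.1 - m₁) + c⁻¹ * d * (z.2 - n₁)) * -(a * (z.1 - m₂) + b * (z.2 - n₂))) =
        (gauss μ₁ V₁ z * gauss μ₂ V₂ z * (c⁻¹ * (a * d - b * b))) *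
          ((n₁ - n₂) * (z.1 - m₁) - (m₁ - m₂) * (z.2 - n₁)) from by ring]
    rw [mul_eq_zero]
    simp [hK]
  rw [key]
  -- the line
  refine ⟨(m₁, n₁), (m₁ - m₂, n₁ - n₂), ?_, ?_⟩
  · intro hv
    apply hμ
    have h1 : m₁ - m₂ = 0 := congrArg Prod.fst hv
    have h2 : n₁ - n₂ = 0 := congrArg Prod.snd hv
    funext i
    fin_cases i
    · exact sub_eq_zero.mp h1
    · exact sub_eq_zero.mp h2
  · ext z
    simp only [Set.mem_setOf_eq]
    constructor
    · intro hz
      set A := m₁ - m₂ with hA'; set B := n₁ - n₂ with hB'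
      have hD : A^2 + B^2 ≠ 0 := by
        intro h
        apply hμ
        have hA : A = 0 := by nlinarith [sq_nonneg A, sq_nonneg B]
        have hB : B = 0 := by nlinarith [sq_nonneg A, sq_nonneg B]
        funext i
        fin_cases i
        · exact sub_eq_zero.mp hA
        · exact sub_eq_zero.mp hB
      refine ⟨(A * (z.1 - m₁) + B * (z.2 - n₁)) / (A^2 + B^2), ?_⟩
      rw [Prod.ext_iff]
      constructor
      · simp only [Prod.fst_add, Prod.smul_fst, smul_eq_mul]
        field_simp
        linear_combination B * hz
      · simp only [Prod.snd_add, Prod.smul_snd, smul_eq_mul]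
        field_simp
        linear_combination (-A) * hz
    · rintro ⟨t, ht⟩
      have h1 : z.1 = m₁ + t * (m₁ - m₂) := congrArg Prod.fst ht
      have h2 : z.2 = n₁ + t * (n₁ - n₂) := congrArg Prod.snd ht
      rw [h1, h2]; ring
end

section
/- Let μ₁ = (0, 0), μ₂ = (m₁, m₂) ∈ ℝ², let Σ₁ = I be the 2×2 identity matrix and Σ₂ = diag(σ₁², σ₂²) with σ₁, σ₂ > 0, let f_i = φ(·; μ_i, Σ_i) for i = 1, 2, and set F = (f₁, f₂) : ℝ² → ℝ². Then the singular set of F is the zero set of an explicit quadratic: S(F) = {(x, y) ∈ ℝ² : −(σ₁² − σ₂²) x y + m₂ σ₁² x − m₁ σ₂² y = 0}. -/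
open Matrix

noncomputable section Aux

def Lab (a b : ℝ) : (ℝ × ℝ) →L[ℝ] ℝ :=
  a • ContinuousLinearMap.fst ℝ ℝ ℝ + b • ContinuousLinearMap.snd ℝ ℝ ℝ

lemma Lab_apply (a b : ℝ) (v : ℝ × ℝ) : Lab a b v = a * v.1 + b * v.2 := rfl

lemma smul_Lab (c a b : ℝ) : c • Lab a b = Lab (c * a) (c * b) := by
  ext v <;> simp [Lab_apply]

lemma det_prod (a b c d : ℝ) :
    LinearMap.det (((Lab a b).prod (Lab c d)).toLinearMap) = a * d - b * c := by
  rw [← LinearMap.det_toMatrix (Module.Basis.finTwoProd ℝ), Matrix.det_fin_two]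
  simp [LinearMap.toMatrix_apply, Lab_apply, Module.Basis.finTwoProd]

lemma hasFDerivAt_gaussLike (C a b p q : ℝ) (z : ℝ × ℝ) :
    HasFDerivAt (fun z : ℝ × ℝ => C * Real.exp (-(1/2) * (a * (z.1 - p)^2 + b * (z.2 - q)^2)))
      ((C * Real.exp (-(1/2) * (a * (z.1 - p)^2 + b * (z.2 - q)^2))) •
        Lab (-(a * (z.1 - p))) (-(b * (z.2 - q)))) z := by
  have h1 : HasFDerivAt (fun w : ℝ × ℝ => w.1 - p) (ContinuousLinearMap.fst ℝ ℝ ℝ) z :=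
    (hasFDerivAt_fst).sub_const p
  have h2 : HasFDerivAt (fun w : ℝ × ℝ => w.2 - q) (ContinuousLinearMap.snd ℝ ℝ ℝ) z :=
    (hasFDerivAt_snd).sub_const q
  have hsq1 : HasFDerivAt (fun w : ℝ × ℝ => (w.1 - p)^2)
      ((z.1 - p) • ContinuousLinearMap.fst ℝ ℝ ℝ + (z.1 - p) • ContinuousLinearMap.fst ℝ ℝ ℝ) z := by
    exact (h1.mul h1).congr_of_eventuallyEq (Filter.Eventually.of_forall fun w => by simp [pow_two, Pi.mul_apply])
  have hsq2 : HasFDerivAt (fun w : ℝ × ℝ => (w.2 - q)^2)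
      ((z.2 - q) • ContinuousLinearMap.snd ℝ ℝ ℝ + (z.2 - q) • ContinuousLinearMap.snd ℝ ℝ ℝ) z := by
    exact (h2.mul h2).congr_of_eventuallyEq (Filter.Eventually.of_forall fun w => by simp [pow_two, Pi.mul_apply])
  have hu : HasFDerivAt (fun w : ℝ × ℝ => -(1/2) * (a * (w.1 - p)^2 + b * (w.2 - q)^2))
      (Lab (-(a * (z.1 - p))) (-(b * (z.2 - q)))) z := by
    have := ((hsq1.const_mul a).add (hsq2.const_mul b)).const_mul (-(1/2))
    refine this.congr_fderiv ?_
    ext v <;> simp [Lab_apply] <;> ring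
  have h := (hu.exp).const_mul C
  rwa [smul_comm, smul_smul, mul_comm] at h

lemma gauss_one' (z : ℝ × ℝ) :
    gauss ![0, 0] (1 : Matrix (Fin 2) (Fin 2) ℝ) z
      = (2 * Real.pi)⁻¹ * Real.exp (-(1/2) * (1 * (z.1 - 0) ^ 2 + 1 * (z.2 - 0) ^ 2)) := by
  simp only [gauss, Matrix.det_one, Real.sqrt_one, mul_one, inv_one, Matrix.one_mulVec,
    dotProduct, Fin.sum_univ_two, Matrix.cons_val_zero, Matrix.cons_val_one, Matrix.head_cons,
    sub_zero, one_mul]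
  ring_nf

lemma diag_inv' (σ₁ σ₂ : ℝ) (h1 : σ₁ ≠ 0) (h2 : σ₂ ≠ 0) :
    (Matrix.diagonal ![σ₁ ^ 2, σ₂ ^ 2])⁻¹ = Matrix.diagonal ![(σ₁ ^ 2)⁻¹, (σ₂ ^ 2)⁻¹] := by
  apply Matrix.inv_eq_right_inv
  rw [Matrix.diagonal_mul_diagonal]
  have : (fun i => ![σ₁ ^ 2, σ₂ ^ 2] i * ![(σ₁ ^ 2)⁻¹, (σ₂ ^ 2)⁻¹] i) = fun _ => (1:ℝ) := by
    funext i
    fin_cases i <;> simp <;> field_simp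
  rw [this, Matrix.diagonal_one]

lemma gauss_diag' (m₁ m₂ σ₁ σ₂ : ℝ) (h1 : 0 < σ₁) (h2 : 0 < σ₂) (z : ℝ × ℝ) :
    gauss ![m₁, m₂] (Matrix.diagonal ![σ₁ ^ 2, σ₂ ^ 2]) z
      = (2 * Real.pi * (σ₁ * σ₂))⁻¹ *
        Real.exp (-(1/2) * ((σ₁ ^ 2)⁻¹ * (z.1 - m₁) ^ 2 + (σ₂ ^ 2)⁻¹ * (z.2 - m₂) ^ 2)) := by
  rw [gauss, diag_inv' _ _ h1.ne' h2.ne']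
  rw [Matrix.det_diagonal, Fin.prod_univ_two]
  simp only [dotProduct, Fin.sum_univ_two, Matrix.mulVec_diagonal, Matrix.cons_val_zero,
    Matrix.cons_val_one, Matrix.head_cons]
  rw [show σ₁ ^ 2 * σ₂ ^ 2 = (σ₁ * σ₂) ^ 2 by ring, Real.sqrt_sq (by positivity)]
  ring_nf

end Aux

theorem stmt_13 (m₁ m₂ σ₁ σ₂ : ℝ) (hσ₁ : 0 < σ₁) (hσ₂ : 0 < σ₂) :
    singularSet (fun z =>
        (gauss ![0, 0] (1 : Matrix (Fin 2) (Fin 2) ℝ) z,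
         gauss ![m₁, m₂] (Matrix.diagonal ![σ₁ ^ 2, σ₂ ^ 2]) z)) =
      {z : ℝ × ℝ | -(σ₁ ^ 2 - σ₂ ^ 2) * z.1 * z.2
        + m₂ * σ₁ ^ 2 * z.1 - m₁ * σ₂ ^ 2 * z.2 = 0} := by
  have hF : (fun z : ℝ × ℝ =>
        (gauss ![0, 0] (1 : Matrix (Fin 2) (Fin 2) ℝ) z,
         gauss ![m₁, m₂] (Matrix.diagonal ![σ₁ ^ 2, σ₂ ^ 2]) z)) =
      fun z : ℝ × ℝ =>
        ((2 * Real.pi)⁻¹ * Real.exp (-(1/2) * (1 * (z.1 - 0) ^ 2 + 1 * (z.2 - 0) ^ 2)),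
         (2 * Real.pi * (σ₁ * σ₂))⁻¹ *
           Real.exp (-(1/2) * ((σ₁ ^ 2)⁻¹ * (z.1 - m₁) ^ 2 + (σ₂ ^ 2)⁻¹ * (z.2 - m₂) ^ 2))) := by
    funext z
    rw [gauss_one', gauss_diag' m₁ m₂ σ₁ σ₂ hσ₁ hσ₂]
  ext z
  rw [singularSet, Set.mem_setOf_eq, Set.mem_setOf_eq, hF]
  have hd := (HasFDerivAt.prodMk (hasFDerivAt_gaussLike ((2 * Real.pi)⁻¹) 1 1 0 0 z)
    (hasFDerivAt_gaussLike ((2 * Real.pi * (σ₁ * σ₂))⁻¹) ((σ₁ ^ 2)⁻¹) ((σ₂ ^ 2)⁻¹) m₁ m₂ z))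
  rw [hd.fderiv, smul_Lab, smul_Lab, det_prod]
  set E₁ := (2 * Real.pi)⁻¹ * Real.exp (-(1 / 2) * (1 * (z.1 - 0) ^ 2 + 1 * (z.2 - 0) ^ 2)) with hE₁
  set E₂ := (2 * Real.pi * (σ₁ * σ₂))⁻¹ *
      Real.exp (-(1 / 2) * ((σ₁ ^ 2)⁻¹ * (z.1 - m₁) ^ 2 + (σ₂ ^ 2)⁻¹ * (z.2 - m₂) ^ 2)) with hE₂
  have h1 : 0 < E₁ := by rw [hE₁]; positivity
  have h2 : 0 < E₂ := by rw [hE₂]; positivity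
  have hK : E₁ * E₂ * (σ₁ ^ 2 * σ₂ ^ 2)⁻¹ ≠ 0 := by positivity
  have heq : E₁ * -(1 * (z.1 - 0)) * (E₂ * -((σ₂ ^ 2)⁻¹ * (z.2 - m₂)))
        - E₁ * -(1 * (z.2 - 0)) * (E₂ * -((σ₁ ^ 2)⁻¹ * (z.1 - m₁)))
      = (E₁ * E₂ * (σ₁ ^ 2 * σ₂ ^ 2)⁻¹) *
        (-(-(σ₁ ^ 2 - σ₂ ^ 2) * z.1 * z.2 + m₂ * σ₁ ^ 2 * z.1 - m₁ * σ₂ ^ 2 * z.2)) := by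
    have hs1 : (σ₁ : ℝ) ^ 2 ≠ 0 := by positivity
    have hs2 : (σ₂ : ℝ) ^ 2 ≠ 0 := by positivity
    field_simp
    ring
  rw [heq, mul_eq_zero, neg_eq_zero]
  exact ⟨fun h => h.resolve_left hK, Or.inr⟩
end
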